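/- arXiv:1812.03730 — 12 statements merged into one kernel-verified Lean document; each statement's English description precedes it below -/
import Mathlib

section
/- Suppose the sequence a is dominant. Then condition D₁(a) fails if and only if there exists an index s with p+1 ≤ s ≤ p+q such that a_1 > a_s > a_p. -/
/-- The sequence `a` (with relevant indices `1, …, p+q`) is dominant:
`a 1 ≥ a 2 ≥ … ≥ a p` and `a (p+1) ≥ a (p+2) ≥ … ≥ a (p+q)`. -/
def Dominant (p q : ℕ) (a : ℕ → ℝ) : Prop :=
  (∀ i j, 1 ≤ i → i ≤ j → j ≤ p → a j ≤ a i) ∧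
  (∀ i j, p + 1 ≤ i → i ≤ j → j ≤ p + q → a j ≤ a i)

/-- `R⁺(a) = #{(i,j) : 1 ≤ i ≤ p, p+1 ≤ j ≤ p+q, a i > a j}`. -/
noncomputable def Rplus (p q : ℕ) (a : ℕ → ℝ) : ℕ :=
  ((Finset.Icc 1 p ×ˢ Finset.Icc (p + 1) (p + q)).filter
    (fun ij => a ij.2 < a ij.1)).card

/-- `R⁻(a) = #{(i,j) : 1 ≤ i ≤ p, p+1 ≤ j ≤ p+q, a j > a i}`. -/
noncomputable def Rminus (p q : ℕ) (a : ℕ → ℝ) : ℕ :=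
  ((Finset.Icc 1 p ×ˢ Finset.Icc (p + 1) (p + q)).filter
    (fun ij => a ij.1 < a ij.2)).card

/-- Kobayashi–Oshima condition `D₁(a)`: `a p ≥ a (p+1)`, or there is `l` with
`p+1 ≤ l ≤ p+q-1`, `a l ≥ a 1` and `a p ≥ a (l+1)`, or `a (p+q) ≥ a 1`. -/
def D1 (p q : ℕ) (a : ℕ → ℝ) : Prop :=
  a (p + 1) ≤ a p ∨
  (∃ l, p + 1 ≤ l ∧ l ≤ p + q - 1 ∧ a 1 ≤ a l ∧ a (l + 1) ≤ a p) ∨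
  a 1 ≤ a (p + q)

/-- For a dominant sequence, `D₁(a)` fails iff there is an index
`s` with `p+1 ≤ s ≤ p+q` and `a 1 > a s > a p`. -/
theorem d1_fails_iff (p q : ℕ) (a : ℕ → ℝ) (hp : 1 ≤ p) (hq : 1 ≤ q)
    (hdom : Dominant p q a) :
    ¬ D1 p q a ↔ ∃ s, p + 1 ≤ s ∧ s ≤ p + q ∧ a s < a 1 ∧ a p < a s := by
  constructor
  · intro hD
    unfold D1 at hD
    push_neg at hD
    obtain ⟨h1, h2, h3⟩ := hD
    have hex : ∃ n, p + 1 ≤ n ∧ a n < a 1 := ⟨p + q, by omega, h3⟩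
    classical
    set s := Nat.find hex with hs
    obtain ⟨hs1, hs2⟩ := Nat.find_spec hex
    have hsle : s ≤ p + q := Nat.find_le ⟨by omega, h3⟩
    refine ⟨s, hs1, hsle, hs2, ?_⟩
    rcases eq_or_lt_of_le hs1 with heq | hlt
    · simp only [hs, ← heq]; exact h1
    · have hmin := Nat.find_min hex (m := s - 1) (by omega)
      push_neg at hmin
      have hprev : a 1 ≤ a (s - 1) := hmin (by omega)
      have := h2 (s - 1) (by omega) (by omega) hprev
      have hs1' : s - 1 + 1 = s := by omega
      rwa [hs1'] at this
  · rintro ⟨s, hs1, hs2, hlt1, hlt2⟩ hD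
    rcases hD with h | ⟨l, hl1, hl2, hl3, hl4⟩ | h
    · have : a s ≤ a (p + 1) := hdom.2 (p + 1) s le_rfl hs1 hs2
      linarith
    · rcases le_or_gt s l with hsl | hls
      · have : a l ≤ a s := hdom.2 s l hs1 hsl (by omega)
        linarith
      · have : a s ≤ a (l + 1) := hdom.2 (l + 1) s (by omega) (by omega) hs2
        linarith
    · have : a (p + q) ≤ a s := hdom.2 s (p + q) hs1 hs2 le_rfl
      linarith
end

section
/- Suppose the sequence a is dominant. Then condition D₂(a) fails if and only if there exists an index s with 1 ≤ s ≤ p such that a_{p+1} > a_s > a_{p+q}. -/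
/-- Kobayashi–Oshima condition `D₂(a)`: `a (p+q) ≥ a 1`, or there is `l` with
`1 ≤ l ≤ p-1`, `a l ≥ a (p+1)` and `a (p+q) ≥ a (l+1)`, or `a p ≥ a (p+1)`. -/
def D2 (p q : ℕ) (a : ℕ → ℝ) : Prop :=
  a 1 ≤ a (p + q) ∨
  (∃ l, 1 ≤ l ∧ l ≤ p - 1 ∧ a (p + 1) ≤ a l ∧ a (l + 1) ≤ a (p + q)) ∨
  a (p + 1) ≤ a p

/-- For a dominant sequence, `D₂(a)` fails iff there is an index
`s` with `1 ≤ s ≤ p` and `a (p+1) > a s > a (p+q)`. -/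
theorem d2_fails_iff (p q : ℕ) (a : ℕ → ℝ) (hp : 1 ≤ p) (hq : 1 ≤ q)
    (hdom : Dominant p q a) :
    ¬ D2 p q a ↔ ∃ s, 1 ≤ s ∧ s ≤ p ∧ a s < a (p + 1) ∧ a (p + q) < a s := by
  obtain ⟨hdom1, hdom2⟩ := hdom
  constructor
  · intro hnd
    simp only [D2, not_or, not_exists, not_and, not_le] at hnd
    obtain ⟨h1, h2, h3⟩ := hnd
    set S := (Finset.Icc 1 p).filter (fun s => a (p + q) < a s) with hS
    have hne : S.Nonempty := ⟨1, by simp [hS, hp, h1]⟩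
    set s := S.max' hne with hsdef
    have hsS : s ∈ S := S.max'_mem hne
    simp only [hS, Finset.mem_filter, Finset.mem_Icc] at hsS
    obtain ⟨⟨hs1, hsp⟩, hsgt⟩ := hsS
    by_cases hc : a s < a (p + 1)
    · exact ⟨s, hs1, hsp, hc, hsgt⟩
    · push_neg at hc
      have hsnp : s ≠ p := by
        intro h
        rw [h] at hc
        exact absurd hc (not_le.mpr (h3))
      have hsp1 : s ≤ p - 1 := by omega
      have hs1p : s + 1 ≤ p := by omega
      have hnotmem : s + 1 ∉ S := fun hmem =>
        absurd (S.le_max' _ hmem) (by omega)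
      simp only [hS, Finset.mem_filter, Finset.mem_Icc, not_and, not_lt] at hnotmem
      have := hnotmem ⟨by omega, hs1p⟩
      exact absurd this (not_le.mpr (by
        have := h2 s hs1 hsp1 hc
        linarith))
  · rintro ⟨s, hs1, hsp, hlt, hgt⟩ hd
    rcases hd with h | ⟨l, hl1, hlp, hl2, hl3⟩ | h
    · have : a s ≤ a 1 := hdom1 1 s le_rfl hs1 hsp
      linarith
    · rcases le_or_gt s l with h | h
      · have : a l ≤ a s := hdom1 s l hs1 h (by omega)
        linarith
      · have : a s ≤ a (l + 1) := hdom1 (l + 1) s (by omega) h hsp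
        linarith
    · have : a p ≤ a s := hdom1 s p hs1 hsp le_rfl
      linarith
end

section
/- For every real number c one has R⁺(a) + R⁻(a) ≥ x(c)·(m(c)+n(c)) + y(c)·(n(c)+l(c)) + z(c)·(l(c)+m(c)). (This is inequality (4) in the paper, applied with c = a_s.) -/
/-- `x(c) = #{i : 1 ≤ i ≤ p, a i > c}`. -/
noncomputable def cntX (p : ℕ) (a : ℕ → ℝ) (c : ℝ) : ℕ :=
  ((Finset.Icc 1 p).filter (fun i => c < a i)).card

/-- `y(c) = #{i : 1 ≤ i ≤ p, a i = c}`. -/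
noncomputable def cntY (p : ℕ) (a : ℕ → ℝ) (c : ℝ) : ℕ :=
  ((Finset.Icc 1 p).filter (fun i => a i = c)).card

/-- `z(c) = #{i : 1 ≤ i ≤ p, a i < c}`. -/
noncomputable def cntZ (p : ℕ) (a : ℕ → ℝ) (c : ℝ) : ℕ :=
  ((Finset.Icc 1 p).filter (fun i => a i < c)).card

/-- `l(c) = #{j : p+1 ≤ j ≤ p+q, a j > c}`. -/
noncomputable def cntL (p q : ℕ) (a : ℕ → ℝ) (c : ℝ) : ℕ :=
  ((Finset.Icc (p + 1) (p + q)).filter (fun j => c < a j)).card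

/-- `m(c) = #{j : p+1 ≤ j ≤ p+q, a j = c}`. -/
noncomputable def cntM (p q : ℕ) (a : ℕ → ℝ) (c : ℝ) : ℕ :=
  ((Finset.Icc (p + 1) (p + q)).filter (fun j => a j = c)).card

/-- `n(c) = #{j : p+1 ≤ j ≤ p+q, a j < c}`. -/
noncomputable def cntN (p q : ℕ) (a : ℕ → ℝ) (c : ℝ) : ℕ :=
  ((Finset.Icc (p + 1) (p + q)).filter (fun j => a j < c)).card

lemma card_mul_card_aux (s t : Finset ℕ) (f : ℕ → Prop) (g : ℕ → Prop)
    [DecidablePred f] [DecidablePred g] :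
    (s.filter f).card * (t.filter g).card
      = ((s ×ˢ t).filter (fun ij => f ij.1 ∧ g ij.2)).card := by
  rw [Finset.filter_product, Finset.card_product]

lemma card_add_card_aux {α : Type*} [DecidableEq α] (s : Finset α) (f g : α → Prop)
    [DecidablePred f] [DecidablePred g] (h : ∀ x, ¬ (f x ∧ g x)) :
    (s.filter f).card + (s.filter g).card
      = (s.filter (fun x => f x ∨ g x)).card := by
  rw [← Finset.card_union_of_disjoint, Finset.filter_union_right]
  exact Finset.disjoint_left.2 (fun x hx hy =>
    h x ⟨(Finset.mem_filter.1 hx).2, (Finset.mem_filter.1 hy).2⟩)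

/-- inequality (4):
`R⁺(a) + R⁻(a) ≥ x(c)·(m(c)+n(c)) + y(c)·(n(c)+l(c)) + z(c)·(l(c)+m(c))`. -/
theorem ineq_R (p q : ℕ) (a : ℕ → ℝ) (hp : 1 ≤ p) (hq : 1 ≤ q) (c : ℝ) :
    cntX p a c * (cntM p q a c + cntN p q a c) +
      cntY p a c * (cntN p q a c + cntL p q a c) +
      cntZ p a c * (cntL p q a c + cntM p q a c) ≤
      Rplus p q a + Rminus p q a := by
  classical
  set I := Finset.Icc 1 p
  set J := Finset.Icc (p + 1) (p + q)
  have hMN : cntM p q a c + cntN p q a c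
      = (J.filter (fun j => a j = c ∨ a j < c)).card :=
    card_add_card_aux J _ _ (fun x ⟨h1, h2⟩ => by rw [h1] at h2; exact lt_irrefl _ h2)
  have hNL : cntN p q a c + cntL p q a c
      = (J.filter (fun j => a j < c ∨ c < a j)).card :=
    card_add_card_aux J _ _ (fun x ⟨h1, h2⟩ => lt_asymm h1 h2)
  have hLM : cntL p q a c + cntM p q a c
      = (J.filter (fun j => c < a j ∨ a j = c)).card :=
    card_add_card_aux J _ _ (fun x ⟨h1, h2⟩ => by rw [h2] at h1; exact lt_irrefl _ h1)
  rw [hMN, hNL, hLM, cntX, cntY, cntZ,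
    card_mul_card_aux, card_mul_card_aux, card_mul_card_aux]
  set P1 : ℕ × ℕ → Prop := fun x => c < a x.1 ∧ (a x.2 = c ∨ a x.2 < c) with hP1
  set P2 : ℕ × ℕ → Prop := fun x => a x.1 = c ∧ (a x.2 < c ∨ c < a x.2) with hP2
  set P3 : ℕ × ℕ → Prop := fun x => a x.1 < c ∧ (c < a x.2 ∨ a x.2 = c) with hP3
  have e12 : ((I ×ˢ J).filter P1).card + ((I ×ˢ J).filter P2).card
      = ((I ×ˢ J).filter (fun x => P1 x ∨ P2 x)).card :=
    card_add_card_aux _ _ _ (by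
      rintro x ⟨⟨h1, _⟩, ⟨h2, _⟩⟩; rw [h2] at h1; exact lt_irrefl _ h1)
  have e123 : ((I ×ˢ J).filter (fun x => P1 x ∨ P2 x)).card + ((I ×ˢ J).filter P3).card
      = ((I ×ˢ J).filter (fun x => (P1 x ∨ P2 x) ∨ P3 x)).card :=
    card_add_card_aux _ _ _ (by
      rintro x ⟨h12, ⟨h3, _⟩⟩
      rcases h12 with ⟨h1, _⟩ | ⟨h2, _⟩
      · exact lt_asymm h1 h3
      · rw [h2] at h3; exact lt_irrefl _ h3)
  rw [e12, e123]
  have hRR : Rplus p q a + Rminus p q a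
      = ((I ×ˢ J).filter (fun x => a x.2 < a x.1 ∨ a x.1 < a x.2)).card :=
    card_add_card_aux _ _ _ (fun x ⟨h1, h2⟩ => lt_asymm h1 h2)
  rw [hRR]
  apply Finset.card_le_card
  intro x hx
  simp only [Finset.mem_filter] at hx ⊢
  refine ⟨hx.1, ?_⟩
  obtain ((⟨h1, h2 | h2⟩ | ⟨h1, h2 | h2⟩) | ⟨h1, h2 | h2⟩) := hx.2
  · left; rw [h2]; exact h1
  · left; exact h2.trans h1
  · left; rw [h1]; exact h2
  · right; rw [h1]; exact h2
  · right; exact h1.trans h2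
  · right; rw [h2]; exact h1
end

section
/- Assume 5 ≤ p ≤ q ≤ 2p−3, the sequence a is dominant, R⁺(a) = R⁻(a) ≤ q, and there exists an index s with p+1 ≤ s ≤ p+q such that a_1 > a_s > a_p. Then a_1 > a_2, a_2 = a_3 = … = a_{p−1}, a_{p−1} = a_{p+1} = a_{p+2} = … = a_{p+q}, and a_{p+q} > a_p; in particular R⁺(a) = R⁻(a) = q. (This is the key uniqueness statement behind Theorem 1.2(1): among dominant parameters with R⁺ = R⁻ ≤ q that violate the discrete-decomposability condition, only the comparison pattern of λ = ε_1 − ε_p can occur.) -/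
noncomputable def Mcnt (p : ℕ) (a : ℕ → ℝ) (x : ℝ) : ℕ :=
  ((Finset.Icc 1 p).filter (fun i => x < a i)).card
noncomputable def Ncnt (p : ℕ) (a : ℕ → ℝ) (x : ℝ) : ℕ :=
  ((Finset.Icc 1 p).filter (fun i => a i < x)).card
noncomputable def Dcnt (p : ℕ) (a : ℕ → ℝ) (x : ℝ) : ℕ :=
  ((Finset.Icc 1 p).filter (fun i => a i ≠ x)).card
noncomputable def Ecnt (p : ℕ) (a : ℕ → ℝ) (x : ℝ) : ℕ :=
  ((Finset.Icc 1 p).filter (fun i => a i = x)).card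

lemma Rplus_eq (p q : ℕ) (a : ℕ → ℝ) :
    Rplus p q a = ∑ j ∈ Finset.Icc (p+1) (p+q), Mcnt p a (a j) := by
  rw [Rplus, Finset.card_filter, Finset.sum_product, Finset.sum_comm]
  exact Finset.sum_congr rfl fun j _ => by rw [Mcnt, Finset.card_filter]

lemma Rminus_eq (p q : ℕ) (a : ℕ → ℝ) :
    Rminus p q a = ∑ j ∈ Finset.Icc (p+1) (p+q), Ncnt p a (a j) := by
  rw [Rminus, Finset.card_filter, Finset.sum_product, Finset.sum_comm]
  exact Finset.sum_congr rfl fun j _ => by rw [Ncnt, Finset.card_filter]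

lemma MN_D (p : ℕ) (a : ℕ → ℝ) (x : ℝ) : Mcnt p a x + Ncnt p a x = Dcnt p a x := by
  classical
  rw [Mcnt, Ncnt, Dcnt]
  have hdisj : Disjoint ((Finset.Icc 1 p).filter (fun i => x < a i))
      ((Finset.Icc 1 p).filter (fun i => a i < x)) := by
    apply Finset.disjoint_left.mpr
    intro i h1 h2
    simp only [Finset.mem_filter] at h1 h2
    exact absurd (h1.2.trans h2.2) (lt_irrefl x)
  rw [← Finset.card_union_of_disjoint hdisj, ← Finset.filter_or]
  congr 1
  apply Finset.filter_congr
  intro i _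
  constructor
  · rintro (h | h)
    · exact ne_of_gt h
    · exact ne_of_lt h
  · intro h
    exact (Ne.lt_or_gt h).symm

lemma D_E (p : ℕ) (a : ℕ → ℝ) (x : ℝ) : Dcnt p a x + Ecnt p a x = p := by
  classical
  rw [Dcnt, Ecnt, add_comm, Finset.card_filter_add_card_filter_not, Nat.card_Icc]
  omega

lemma Ecnt_le_Dcnt (p : ℕ) (a : ℕ → ℝ) {x y : ℝ} (h : x ≠ y) :
    Ecnt p a x ≤ Dcnt p a y := by
  apply Finset.card_le_card
  intro i hi
  rw [Finset.mem_filter] at hi ⊢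
  exact ⟨hi.1, by rw [hi.2]; exact h⟩

lemma Dcnt_two (p : ℕ) (a : ℕ → ℝ) (x : ℝ) (i1 i2 : ℕ) (h12 : i1 ≠ i2)
    (h1 : i1 ∈ Finset.Icc 1 p) (h2 : i2 ∈ Finset.Icc 1 p)
    (ha1 : a i1 ≠ x) (ha2 : a i2 ≠ x) : 2 ≤ Dcnt p a x := by
  have hsub : ({i1, i2} : Finset ℕ) ⊆ (Finset.Icc 1 p).filter (fun i => a i ≠ x) := by
    intro i hi
    rw [Finset.mem_insert, Finset.mem_singleton] at hi
    rcases hi with h | h <;> subst h <;> rw [Finset.mem_filter] <;> exact ⟨by assumption, by assumption⟩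
  have := Finset.card_le_card hsub
  rwa [Finset.card_pair h12] at this

lemma Mcnt_lb (p : ℕ) (a : ℕ → ℝ) (x : ℝ) (k : ℕ) (hk : k ≤ p)
    (h : ∀ i, 1 ≤ i → i ≤ k → x < a i) : k ≤ Mcnt p a x := by
  have hsub : Finset.Icc 1 k ⊆ (Finset.Icc 1 p).filter (fun i => x < a i) := by
    intro i hi
    rw [Finset.mem_Icc] at hi
    rw [Finset.mem_filter, Finset.mem_Icc]
    exact ⟨⟨hi.1, hi.2.trans hk⟩, h i hi.1 hi.2⟩
  have := Finset.card_le_card hsub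
  rwa [Nat.card_Icc, Nat.add_sub_cancel] at this

lemma Ncnt_lb (p : ℕ) (a : ℕ → ℝ) (x : ℝ) (k : ℕ) (hk : 1 ≤ k)
    (h : ∀ i, k ≤ i → i ≤ p → a i < x) : p + 1 - k ≤ Ncnt p a x := by
  have hsub : Finset.Icc k p ⊆ (Finset.Icc 1 p).filter (fun i => a i < x) := by
    intro i hi
    rw [Finset.mem_Icc] at hi
    rw [Finset.mem_filter, Finset.mem_Icc]
    exact ⟨⟨hk.trans hi.1, hi.2⟩, h i hi.1 hi.2⟩
  have := Finset.card_le_card hsub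
  rwa [Nat.card_Icc] at this

lemma Mcnt_zero (p : ℕ) (a : ℕ → ℝ) (x : ℝ)
    (h : ∀ i, 1 ≤ i → i ≤ p → a i ≤ x) : Mcnt p a x = 0 := by
  rw [Mcnt, Finset.card_eq_zero, Finset.filter_eq_empty_iff]
  intro i hi
  rw [Finset.mem_Icc] at hi
  exact not_lt.mpr (h i hi.1 hi.2)

lemma Ncnt_zero (p : ℕ) (a : ℕ → ℝ) (x : ℝ)
    (h : ∀ i, 1 ≤ i → i ≤ p → x ≤ a i) : Ncnt p a x = 0 := by
  rw [Ncnt, Finset.card_eq_zero, Finset.filter_eq_empty_iff]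
  intro i hi
  rw [Finset.mem_Icc] at hi
  exact not_lt.mpr (h i hi.1 hi.2)

lemma Mcnt_ub (p : ℕ) (a : ℕ → ℝ) (x : ℝ) (i0 : ℕ) (h0 : i0 ∈ Finset.Icc 1 p)
    (h : ¬ x < a i0) : Mcnt p a x ≤ p - 1 := by
  have hsub : (Finset.Icc 1 p).filter (fun i => x < a i) ⊆ (Finset.Icc 1 p).erase i0 := by
    intro i hi
    rw [Finset.mem_filter] at hi
    rw [Finset.mem_erase]
    exact ⟨fun he => h (he ▸ hi.2), hi.1⟩
  have := Finset.card_le_card hsub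
  rwa [Finset.card_erase_of_mem h0, Nat.card_Icc, Nat.add_sub_cancel] at this

lemma Ncnt_ub (p : ℕ) (a : ℕ → ℝ) (x : ℝ) (i0 : ℕ) (h0 : i0 ∈ Finset.Icc 1 p)
    (h : ¬ a i0 < x) : Ncnt p a x ≤ p - 1 := by
  have hsub : (Finset.Icc 1 p).filter (fun i => a i < x) ⊆ (Finset.Icc 1 p).erase i0 := by
    intro i hi
    rw [Finset.mem_filter] at hi
    rw [Finset.mem_erase]
    exact ⟨fun he => h (he ▸ hi.2), hi.1⟩
  have := Finset.card_le_card hsub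
  rwa [Finset.card_erase_of_mem h0, Nat.card_Icc, Nat.add_sub_cancel] at this

lemma Mcnt_unique {p : ℕ} {a : ℕ → ℝ} {x : ℝ} (h : Mcnt p a x ≤ 1) {i i' : ℕ}
    (hi : i ∈ Finset.Icc 1 p) (hxi : x < a i)
    (hi' : i' ∈ Finset.Icc 1 p) (hxi' : x < a i') : i = i' := by
  rw [Mcnt] at h
  exact Finset.card_le_one.mp h i (Finset.mem_filter.mpr ⟨hi, hxi⟩)
    i' (Finset.mem_filter.mpr ⟨hi', hxi'⟩)

lemma Ncnt_unique {p : ℕ} {a : ℕ → ℝ} {x : ℝ} (h : Ncnt p a x ≤ 1) {i i' : ℕ}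
    (hi : i ∈ Finset.Icc 1 p) (hxi : a i < x)
    (hi' : i' ∈ Finset.Icc 1 p) (hxi' : a i' < x) : i = i' := by
  rw [Ncnt] at h
  exact Finset.card_le_one.mp h i (Finset.mem_filter.mpr ⟨hi, hxi⟩)
    i' (Finset.mem_filter.mpr ⟨hi', hxi'⟩)

/-- key uniqueness statement behind Theorem 1.2(1). Under
`5 ≤ p ≤ q ≤ 2p−3`, a dominant sequence with `R⁺(a) = R⁻(a) ≤ q` admitting an
index `s` with `p+1 ≤ s ≤ p+q` and `a 1 > a s > a p` must satisfy
`a 1 > a 2 = … = a (p-1) = a (p+1) = … = a (p+q) > a p`, and then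
`R⁺(a) = R⁻(a) = q`. -/
theorem uniqueness_case1 (p q : ℕ) (a : ℕ → ℝ)
    (hp : 5 ≤ p) (hpq : p ≤ q) (hq : q ≤ 2 * p - 3)
    (hdom : Dominant p q a)
    (hR : Rplus p q a = Rminus p q a) (hRq : Rminus p q a ≤ q)
    (hs : ∃ s, p + 1 ≤ s ∧ s ≤ p + q ∧ a s < a 1 ∧ a p < a s) :
    a 2 < a 1 ∧
    (∀ i, 2 ≤ i → i ≤ p - 1 → a i = a 2) ∧
    (∀ j, p + 1 ≤ j → j ≤ p + q → a j = a (p - 1)) ∧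
    a p < a (p + q) ∧
    Rplus p q a = q ∧ Rminus p q a = q := by
  classical
  obtain ⟨hd1, hd2⟩ := hdom
  obtain ⟨s0, hs1, hs2, hsa1, hsap⟩ := hs
  have hq0 : 0 < q := by omega
  have hcardt : (Finset.Icc (p+1) (p+q)).card = q := by rw [Nat.card_Icc]; omega
  have hs0t : s0 ∈ Finset.Icc (p+1) (p+q) := Finset.mem_Icc.mpr ⟨hs1, hs2⟩
  have hRp := Rplus_eq p q a
  have hRm := Rminus_eq p q a
  have hap1 : a p < a 1 := hsap.trans hsa1
  -- Step A: the second block is constant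
  have hconst : ∀ j ∈ Finset.Icc (p+1) (p+q), a j = a (p+1) := by
    have hmono : ∀ j ∈ Finset.Icc (p+1) (p+q), a (p+q) ≤ a j ∧ a j ≤ a (p+1) := by
      intro j hj
      rw [Finset.mem_Icc] at hj
      exact ⟨hd2 j (p+q) hj.1 hj.2 le_rfl, hd2 (p+1) j le_rfl hj.1 hj.2⟩
    by_contra hcon
    push_neg at hcon
    obtain ⟨j0, hj0t, hj0⟩ := hcon
    have hlt : a (p+q) < a (p+1) := by
      obtain ⟨h1, h2⟩ := hmono j0 hj0t
      exact lt_of_le_of_lt h1 (lt_of_le_of_ne h2 hj0)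
    -- pick jm maximizing Ecnt
    obtain ⟨jm, hjmt, hjmax⟩ :=
      Finset.exists_max_image (Finset.Icc (p+1) (p+q)) (fun j => Ecnt p a (a j)) ⟨s0, hs0t⟩
    -- total sum bound
    have hsum2q : ∑ j ∈ Finset.Icc (p+1) (p+q), Dcnt p a (a j) ≤ 2 * q := by
      have he : ∑ j ∈ Finset.Icc (p+1) (p+q), Dcnt p a (a j)
          = Rplus p q a + Rminus p q a := by
        rw [hRp, hRm, ← Finset.sum_add_distrib]
        exact Finset.sum_congr rfl fun j _ => (MN_D p a (a j)).symm
      omega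
    have hmem1 : (p+1) ∈ Finset.Icc (p+1) (p+q) := Finset.mem_Icc.mpr ⟨le_rfl, by omega⟩
    have hmemq : (p+q) ∈ Finset.Icc (p+1) (p+q) := Finset.mem_Icc.mpr ⟨by omega, le_rfl⟩
    rcases le_or_gt (Ecnt p a (a jm) + 2) p with hE | hE
    · -- Case 1: Ecnt jm ≤ p - 2
      have h2 : ∀ j ∈ Finset.Icc (p+1) (p+q), 2 ≤ Dcnt p a (a j) := by
        intro j hj
        have hEj := hjmax j hj
        have hDEj := D_E p a (a j)
        omega
      have h3 : ∀ j ∈ Finset.Icc (p+1) (p+q), ¬ a j = a jm → 3 ≤ Dcnt p a (a j) := by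
        intro j hj hne'
        rcases le_or_gt 3 (Ecnt p a (a jm)) with h | h
        · have := Ecnt_le_Dcnt p a (x := a jm) (y := a j) (fun h' => hne' h'.symm)
          omega
        · have hEj := hjmax j hj
          have hDEj := D_E p a (a j)
          omega
      have e1 := Finset.sum_filter_add_sum_filter_not (Finset.Icc (p+1) (p+q))
        (fun j => a j = a jm) (fun j => Dcnt p a (a j))
      have b1 : ((Finset.Icc (p+1) (p+q)).filter (fun j => a j = a jm)).card * 2
          ≤ ∑ j ∈ (Finset.Icc (p+1) (p+q)).filter (fun j => a j = a jm), Dcnt p a (a j) := by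
        have := Finset.sum_le_sum (s := (Finset.Icc (p+1) (p+q)).filter (fun j => a j = a jm))
          (f := fun _ => 2) (g := fun j => Dcnt p a (a j))
          (fun j hj => h2 j (Finset.mem_filter.mp hj).1)
        rwa [Finset.sum_const, smul_eq_mul] at this
      have b2 : ((Finset.Icc (p+1) (p+q)).filter (fun j => ¬ a j = a jm)).card * 3
          ≤ ∑ j ∈ (Finset.Icc (p+1) (p+q)).filter (fun j => ¬ a j = a jm), Dcnt p a (a j) := by
        have := Finset.sum_le_sum (s := (Finset.Icc (p+1) (p+q)).filter (fun j => ¬ a j = a jm))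
          (f := fun _ => 3) (g := fun j => Dcnt p a (a j))
          (fun j hj => h3 j (Finset.mem_filter.mp hj).1 (Finset.mem_filter.mp hj).2)
        rwa [Finset.sum_const, smul_eq_mul] at this
      have hTq : ((Finset.Icc (p+1) (p+q)).filter (fun j => a j = a jm)).card
          + ((Finset.Icc (p+1) (p+q)).filter (fun j => ¬ a j = a jm)).card = q := by
        rw [Finset.card_filter_add_card_filter_not, hcardt]
      have hT2c : ((Finset.Icc (p+1) (p+q)).filter (fun j => ¬ a j = a jm)).card = 0 := by
        omega
      rw [Finset.card_eq_zero, Finset.filter_eq_empty_iff] at hT2c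
      have hv1 : a (p+1) = a jm := by
        by_contra h'
        exact (hT2c hmem1) h'
      have hvq : a (p+q) = a jm := by
        by_contra h'
        exact (hT2c hmemq) h'
      exact absurd (hv1.trans hvq.symm) hlt.ne'
    · -- Case 2: Ecnt jm ≥ p - 1
      have hD1 : Dcnt p a (a jm) ≤ 1 := by
        have := D_E p a (a jm)
        omega
      have h1p : a 1 = a jm ∨ a p = a jm := by
        by_contra hc
        push_neg at hc
        have := Dcnt_two p a (a jm) 1 p (by omega)
          (Finset.mem_Icc.mpr ⟨le_rfl, by omega⟩) (Finset.mem_Icc.mpr ⟨by omega, le_rfl⟩)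
          hc.1 hc.2
        omega
      rcases h1p with h1v | hpv
      · -- a 1 = a jm : top block is a 1 = ... = a (p-1) = v > a p
        have hapne : a p ≠ a jm := fun h => (ne_of_lt hap1) (h.trans h1v.symm)
        have hmid : ∀ i, 1 ≤ i → i ≤ p - 1 → a i = a jm := by
          intro i h1i hi
          by_contra hne'
          have := Dcnt_two p a (a jm) i p (by omega)
            (Finset.mem_Icc.mpr ⟨h1i, by omega⟩) (Finset.mem_Icc.mpr ⟨by omega, le_rfl⟩)
            hne' hapne
          omega
        have hapv : a p < a jm := by
          have h5 : a p ≤ a (p-1) := hd1 (p-1) p (by omega) (by omega) le_rfl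
          rw [hmid (p-1) (by omega) le_rfl] at h5
          exact lt_of_le_of_ne h5 hapne
        have hs0lt : a s0 < a jm := by rw [← h1v]; exact hsa1
        -- B = {j : a j < v}
        have hBsub : ∀ j ∈ (Finset.Icc (p+1) (p+q)).filter (fun j => a j < a jm),
            p - 1 ≤ Mcnt p a (a j) := by
          intro j hjB
          obtain ⟨hjt, hjlt⟩ := Finset.mem_filter.mp hjB
          exact Mcnt_lb p a (a j) (p-1) (by omega)
            (fun i h1i hik => by rw [hmid i h1i hik]; exact hjlt)
        have hBR : ((Finset.Icc (p+1) (p+q)).filter (fun j => a j < a jm)).card * (p-1)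
            ≤ Rplus p q a := by
          calc ((Finset.Icc (p+1) (p+q)).filter (fun j => a j < a jm)).card * (p-1)
              = ∑ _j ∈ (Finset.Icc (p+1) (p+q)).filter (fun j => a j < a jm), (p-1) := by
                rw [Finset.sum_const, smul_eq_mul]
            _ ≤ ∑ j ∈ (Finset.Icc (p+1) (p+q)).filter (fun j => a j < a jm),
                  Mcnt p a (a j) := Finset.sum_le_sum hBsub
            _ ≤ ∑ j ∈ Finset.Icc (p+1) (p+q), Mcnt p a (a j) :=
                Finset.sum_le_sum_of_subset (Finset.filter_subset _ _)
            _ = Rplus p q a := hRp.symm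
        have hBcard : ((Finset.Icc (p+1) (p+q)).filter (fun j => a j < a jm)).card ≤ 1 := by
          by_contra hB2
          push_neg at hB2
          have : 2 * (p-1) ≤ ((Finset.Icc (p+1) (p+q)).filter (fun j => a j < a jm)).card * (p-1) :=
            Nat.mul_le_mul_right _ hB2
          omega
        have hs0B : s0 ∈ (Finset.Icc (p+1) (p+q)).filter (fun j => a j < a jm) :=
          Finset.mem_filter.mpr ⟨hs0t, hs0lt⟩
        have hBeq : (Finset.Icc (p+1) (p+q)).filter (fun j => a j < a jm) = {s0} :=
          Finset.eq_singleton_iff_unique_mem.mpr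
            ⟨hs0B, fun x hx => Finset.card_le_one.mp hBcard x hx s0 hs0B⟩
        have hRub : Rplus p q a ≤ p - 1 := by
          rw [hRp, ← Finset.sum_filter_add_sum_filter_not (Finset.Icc (p+1) (p+q))
            (fun j => a j < a jm) (fun j => Mcnt p a (a j))]
          have e3 : ∑ j ∈ (Finset.Icc (p+1) (p+q)).filter (fun j => ¬ a j < a jm),
              Mcnt p a (a j) = 0 := by
            apply Finset.sum_eq_zero
            intro j hj
            obtain ⟨hjt, hjge⟩ := Finset.mem_filter.mp hj
            push_neg at hjge
            exact Mcnt_zero p a (a j) (fun i h1i hip =>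
              le_trans (by rw [← h1v]; exact hd1 1 i le_rfl h1i hip) hjge)
          rw [hBeq, Finset.sum_singleton, e3, add_zero]
          exact Mcnt_ub p a (a s0) p (Finset.mem_Icc.mpr ⟨by omega, le_rfl⟩)
            (not_lt.mpr (le_of_lt hsap))
        have hRlb : q ≤ Rminus p q a := by
          rw [hRm]
          calc q = ∑ _j ∈ Finset.Icc (p+1) (p+q), 1 := by
                rw [Finset.sum_const, smul_eq_mul, mul_one, hcardt]
            _ ≤ ∑ j ∈ Finset.Icc (p+1) (p+q), Ncnt p a (a j) := by
                apply Finset.sum_le_sum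
                intro j hj
                have hpj : a p < a j := by
                  rcases lt_or_ge (a j) (a jm) with hlt' | hge
                  · have hjB : j ∈ (Finset.Icc (p+1) (p+q)).filter (fun j => a j < a jm) :=
                      Finset.mem_filter.mpr ⟨hj, hlt'⟩
                    rw [hBeq, Finset.mem_singleton] at hjB
                    rw [hjB]; exact hsap
                  · exact lt_of_lt_of_le hapv hge
                have := Ncnt_lb p a (a j) p (by omega)
                  (fun i hpi hip => by
                    have hip' : i = p := le_antisymm hip hpi
                    rw [hip']; exact hpj)
                omega
        omega
      · -- a p = a jm : bottom block is a 1 > v = a 2 = ... = a p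
        have ha1ne : a 1 ≠ a jm := fun h => (ne_of_lt hap1) (hpv.trans h.symm)
        have hmid : ∀ i, 2 ≤ i → i ≤ p → a i = a jm := by
          intro i h2i hi
          by_contra hne'
          have := Dcnt_two p a (a jm) i 1 (by omega)
            (Finset.mem_Icc.mpr ⟨by omega, hi⟩) (Finset.mem_Icc.mpr ⟨le_rfl, by omega⟩)
            hne' ha1ne
          omega
        have ha1v : a jm < a 1 := by
          have h5 : a 2 ≤ a 1 := hd1 1 2 le_rfl (by omega) (by omega)
          rw [hmid 2 le_rfl (by omega)] at h5
          exact lt_of_le_of_ne h5 (fun h => ha1ne h.symm)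
        have hs0gt : a jm < a s0 := by rw [← hpv]; exact hsap
        have hAsub : ∀ j ∈ (Finset.Icc (p+1) (p+q)).filter (fun j => a jm < a j),
            p - 1 ≤ Ncnt p a (a j) := by
          intro j hjA
          obtain ⟨hjt, hjgt⟩ := Finset.mem_filter.mp hjA
          have := Ncnt_lb p a (a j) 2 (by omega)
            (fun i h2i hip => by rw [hmid i h2i hip]; exact hjgt)
          omega
        have hAR : ((Finset.Icc (p+1) (p+q)).filter (fun j => a jm < a j)).card * (p-1)
            ≤ Rminus p q a := by
          calc ((Finset.Icc (p+1) (p+q)).filter (fun j => a jm < a j)).card * (p-1)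
              = ∑ _j ∈ (Finset.Icc (p+1) (p+q)).filter (fun j => a jm < a j), (p-1) := by
                rw [Finset.sum_const, smul_eq_mul]
            _ ≤ ∑ j ∈ (Finset.Icc (p+1) (p+q)).filter (fun j => a jm < a j),
                  Ncnt p a (a j) := Finset.sum_le_sum hAsub
            _ ≤ ∑ j ∈ Finset.Icc (p+1) (p+q), Ncnt p a (a j) :=
                Finset.sum_le_sum_of_subset (Finset.filter_subset _ _)
            _ = Rminus p q a := hRm.symm
        have hAcard : ((Finset.Icc (p+1) (p+q)).filter (fun j => a jm < a j)).card ≤ 1 := by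
          by_contra hA2
          push_neg at hA2
          have : 2 * (p-1) ≤ ((Finset.Icc (p+1) (p+q)).filter (fun j => a jm < a j)).card * (p-1) :=
            Nat.mul_le_mul_right _ hA2
          omega
        have hs0A : s0 ∈ (Finset.Icc (p+1) (p+q)).filter (fun j => a jm < a j) :=
          Finset.mem_filter.mpr ⟨hs0t, hs0gt⟩
        have hAeq : (Finset.Icc (p+1) (p+q)).filter (fun j => a jm < a j) = {s0} :=
          Finset.eq_singleton_iff_unique_mem.mpr
            ⟨hs0A, fun x hx => Finset.card_le_one.mp hAcard x hx s0 hs0A⟩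
        have hRub : Rminus p q a ≤ p - 1 := by
          rw [hRm, ← Finset.sum_filter_add_sum_filter_not (Finset.Icc (p+1) (p+q))
            (fun j => a jm < a j) (fun j => Ncnt p a (a j))]
          have e3 : ∑ j ∈ (Finset.Icc (p+1) (p+q)).filter (fun j => ¬ a jm < a j),
              Ncnt p a (a j) = 0 := by
            apply Finset.sum_eq_zero
            intro j hj
            obtain ⟨hjt, hjge⟩ := Finset.mem_filter.mp hj
            push_neg at hjge
            exact Ncnt_zero p a (a j) (fun i h1i hip =>
              le_trans hjge (by rw [← hpv]; exact hd1 i p h1i hip le_rfl))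
          rw [hAeq, Finset.sum_singleton, e3, add_zero]
          exact Ncnt_ub p a (a s0) 1 (Finset.mem_Icc.mpr ⟨le_rfl, by omega⟩)
            (not_lt.mpr (le_of_lt hsa1))
        have hRlb : q ≤ Rplus p q a := by
          rw [hRp]
          calc q = ∑ _j ∈ Finset.Icc (p+1) (p+q), 1 := by
                rw [Finset.sum_const, smul_eq_mul, mul_one, hcardt]
            _ ≤ ∑ j ∈ Finset.Icc (p+1) (p+q), Mcnt p a (a j) := by
                apply Finset.sum_le_sum
                intro j hj
                have hj1 : a j < a 1 := by
                  rcases lt_or_ge (a jm) (a j) with hlt' | hge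
                  · have hjA : j ∈ (Finset.Icc (p+1) (p+q)).filter (fun j => a jm < a j) :=
                      Finset.mem_filter.mpr ⟨hj, hlt'⟩
                    rw [hAeq, Finset.mem_singleton] at hjA
                    rw [hjA]; exact hsa1
                  · exact lt_of_le_of_lt hge ha1v
                exact Mcnt_lb p a (a j) 1 (by omega)
                  (fun i h1i hi1 => by
                    have : i = 1 := le_antisymm hi1 h1i
                    rw [this]; exact hj1)
        omega
  -- Step B: conclude the structure
  have hs0v : a s0 = a (p+1) := hconst s0 hs0t
  have hRpv : Rplus p q a = q * Mcnt p a (a s0) := by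
    rw [hRp]
    rw [show (∑ j ∈ Finset.Icc (p+1) (p+q), Mcnt p a (a j))
        = ∑ _j ∈ Finset.Icc (p+1) (p+q), Mcnt p a (a s0) from
      Finset.sum_congr rfl fun j hj => by rw [hconst j hj, hs0v]]
    rw [Finset.sum_const, hcardt, smul_eq_mul]
  have hRmv : Rminus p q a = q * Ncnt p a (a s0) := by
    rw [hRm]
    rw [show (∑ j ∈ Finset.Icc (p+1) (p+q), Ncnt p a (a j))
        = ∑ _j ∈ Finset.Icc (p+1) (p+q), Ncnt p a (a s0) from
      Finset.sum_congr rfl fun j hj => by rw [hconst j hj, hs0v]]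
    rw [Finset.sum_const, hcardt, smul_eq_mul]
  have hMN : Mcnt p a (a s0) = Ncnt p a (a s0) := by
    apply Nat.eq_of_mul_eq_mul_left hq0
    rw [← hRpv, ← hRmv, hR]
  have hNle1 : Ncnt p a (a s0) ≤ 1 := by
    have h1 : q * Ncnt p a (a s0) ≤ q * 1 := by rw [mul_one, ← hRmv]; exact hRq
    exact Nat.le_of_mul_le_mul_left h1 hq0
  have hNge1 : 1 ≤ Ncnt p a (a s0) := by
    have := Ncnt_lb p a (a s0) p (by omega)
      (fun i hpi hip => by
        have : i = p := le_antisymm hip hpi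
        rw [this]; exact hsap)
    omega
  have hN1 : Ncnt p a (a s0) = 1 := le_antisymm hNle1 hNge1
  have hM1 : Mcnt p a (a s0) = 1 := by rw [hMN, hN1]
  have hupper : ∀ i, 2 ≤ i → i ≤ p → a i ≤ a s0 := by
    intro i h2i hip
    by_contra hlt'
    push_neg at hlt'
    have := Mcnt_unique (le_of_eq hM1)
      (Finset.mem_Icc.mpr ⟨by omega, hip⟩) hlt'
      (Finset.mem_Icc.mpr ⟨le_rfl, by omega⟩) hsa1
    omega
  have hlower : ∀ i, 1 ≤ i → i ≤ p - 1 → a s0 ≤ a i := by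
    intro i h1i hip
    by_contra hlt'
    push_neg at hlt'
    have := Ncnt_unique (le_of_eq hN1)
      (Finset.mem_Icc.mpr ⟨h1i, by omega⟩) hlt'
      (Finset.mem_Icc.mpr ⟨by omega, le_rfl⟩) hsap
    omega
  have h2v : a 2 = a s0 := le_antisymm (hupper 2 le_rfl (by omega)) (hlower 2 (by omega) (by omega))
  have hp1v : a (p-1) = a s0 :=
    le_antisymm (hupper (p-1) (by omega) (by omega)) (hlower (p-1) (by omega) le_rfl)
  refine ⟨?_, ?_, ?_, ?_, ?_, ?_⟩
  · rw [h2v]; exact hsa1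
  · intro i h2i hip
    rw [h2v]
    exact le_antisymm (hupper i h2i (by omega)) (hlower i (by omega) hip)
  · intro j hj1 hj2
    rw [hp1v, hconst j (Finset.mem_Icc.mpr ⟨hj1, hj2⟩), hs0v]
  · have h3 : a (p+q) = a (p+1) := hconst (p+q) (Finset.mem_Icc.mpr ⟨by omega, le_rfl⟩)
    rw [h3, ← hs0v]
    exact hsap
  · rw [hRpv, hM1, mul_one]
  · rw [hRmv, hN1, mul_one]
end

section
/- Assume 5 ≤ p ≤ q with q ≠ p+1, the sequence a is dominant, R⁺(a) = R⁻(a) ≤ p, and there exists an index s with 1 ≤ s ≤ p such that a_{p+1} > a_s > a_{p+q}. Then a_{p+1} > a_1, a_1 = a_2 = … = a_p = a_{p+2} = … = a_{p+q−1}, and a_{p+q−1} > a_{p+q}; in particular R⁺(a) = R⁻(a) = p. (This is the key uniqueness statement behind Theorem 1.2(2): among dominant parameters with R⁺ = R⁻ ≤ p that violate the discrete-decomposability condition, only the comparison pattern of λ = ε_{p+1} − ε_{p+q} can occur.) -/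
open Finset

section Counting

variable {α β γ M : Type*}

theorem card_filter_product_eq_sum (s : Finset α) (t : Finset β) (P : α × β → Prop)
    [DecidablePred P] : #{x ∈ s ×ˢ t | P x} = ∑ j ∈ t, #{i ∈ s | P (i, j)} := by
  simp only [card_filter]
  exact sum_product_right s t _

theorem card_mul_card_le_card_filter_product {s : Finset α} {t u : Finset β}
    {P : α × β → Prop} [DecidablePred P] (hu : u ⊆ t) (hP : ∀ x ∈ s ×ˢ u, P x) :
    #s * #u ≤ #{x ∈ s ×ˢ t | P x} := by
  rw [← card_product]
  exact card_le_card fun x hx => mem_filter.2 ⟨product_subset_product_right hu hx, hP x hx⟩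

theorem card_filter_product_le_card_sub_one [DecidableEq β] {s : Finset α} {t : Finset β}
    {P : α × β → Prop} [DecidablePred P] {r : α} {j₀ : β} (hj₀ : j₀ ∈ t)
    (hP : ∀ x ∈ s ×ˢ t, P x → x.1 = r ∧ x.2 ≠ j₀) :
    #{x ∈ s ×ˢ t | P x} ≤ #t - 1 :=
  calc #{x ∈ s ×ˢ t | P x} ≤ #({r} ×ˢ t.erase j₀) := card_le_card fun x hx => by
        obtain ⟨hxst, hPx⟩ := mem_filter.1 hx
        obtain ⟨hr, hj⟩ := hP x hxst hPx
        exact mem_product.2 ⟨mem_singleton.2 hr, mem_erase.2 ⟨hj, (mem_product.1 hxst).2⟩⟩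
    _ = #t - 1 := by rw [card_product, card_singleton, one_mul, card_erase_of_mem hj₀]

theorem card_add_one_le_card_filter_ne_add_card_filter_ne [DecidableEq γ] {s : Finset α}
    {f : α → γ} {v w : γ} (hvw : v ≠ w) {x : α} (hx : x ∈ s) (hxv : f x ≠ v)
    (hxw : f x ≠ w) :
    #s + 1 ≤ #{i ∈ s | f i ≠ v} + #{i ∈ s | f i ≠ w} := by
  classical
  have hunion : {i ∈ s | f i ≠ v} ∪ {i ∈ s | f i ≠ w} = s := by
    rw [← filter_or, filter_true_of_mem]
    intro i _
    by_contra! h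
    exact hvw (h.1.symm.trans h.2)
  have hinter : 0 < #({i ∈ s | f i ≠ v} ∩ {i ∈ s | f i ≠ w}) :=
    card_pos.2 ⟨x, by simp [hx, hxv, hxw]⟩
  rw [← card_union_add_card_inter, hunion]
  omega

theorem exists_forall_ne_eq_of_card_filter_ne_eq_one [DecidableEq γ] {s : Finset α}
    {f : α → γ} {v : γ} (h : #{i ∈ s | f i ≠ v} = 1) :
    ∃ r ∈ s, ∀ i ∈ s, i ≠ r → f i = v := by
  obtain ⟨r, hr⟩ := card_eq_one.1 h
  have hrmem : r ∈ {i ∈ s | f i ≠ v} := hr ▸ mem_singleton_self r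
  refine ⟨r, (mem_filter.1 hrmem).1, fun i hi hir => ?_⟩
  by_contra hne
  exact hir (mem_singleton.1 (hr ▸ mem_filter.2 ⟨hi, hne⟩))

theorem sum_Icc_eq_add_add_sum_Icc [AddCommMonoid M] (f : ℕ → M) {p q : ℕ} (hq : 2 ≤ q) :
    ∑ j ∈ Icc (p + 1) (p + q), f j
      = f (p + 1) + f (p + q) + ∑ j ∈ Icc (p + 2) (p + q - 1), f j := by
  have hsplit :
      Icc (p + 1) (p + q) = insert (p + 1) (insert (p + q) (Icc (p + 2) (p + q - 1))) := by
    ext j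
    simp only [mem_insert, mem_Icc]
    omega
  rw [hsplit, sum_insert (by simp only [mem_insert, mem_Icc]; omega),
    sum_insert (by simp only [mem_Icc]; omega), add_assoc]

end Counting

noncomputable def mismatch (p : ℕ) (a : ℕ → ℝ) (j : ℕ) : ℕ :=
  #{i ∈ Icc 1 p | a i ≠ a j}

section Tableau

variable {p q s : ℕ} {a : ℕ → ℝ} {c : ℝ}

theorem Rplus_add_Rminus_eq_sum_mismatch (p q : ℕ) (a : ℕ → ℝ) :
    Rplus p q a + Rminus p q a = ∑ j ∈ Icc (p + 1) (p + q), mismatch p a j := by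
  rw [Rplus, Rminus, ← card_union_of_disjoint (disjoint_filter.2 fun _ _ h => h.asymm),
    ← filter_or, filter_congr fun x _ => lt_or_lt_iff_ne.trans ne_comm]
  exact card_filter_product_eq_sum _ _ _

theorem mul_card_le_Rplus {u : Finset ℕ} (hu : u ⊆ Icc (p + 1) (p + q))
    (h : ∀ i ∈ Icc 1 p, ∀ j ∈ u, a j < a i) : p * #u ≤ Rplus p q a := by
  have hcard := card_mul_card_le_card_filter_product (s := Icc 1 p) hu fun x hx =>
    h x.1 (mem_product.1 hx).1 x.2 (mem_product.1 hx).2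
  rwa [Nat.card_Icc, Nat.add_sub_cancel] at hcard

theorem mul_card_le_Rminus {u : Finset ℕ} (hu : u ⊆ Icc (p + 1) (p + q))
    (h : ∀ i ∈ Icc 1 p, ∀ j ∈ u, a i < a j) : p * #u ≤ Rminus p q a := by
  have hcard := card_mul_card_le_card_filter_product (s := Icc 1 p) hu fun x hx =>
    h x.1 (mem_product.1 hx).1 x.2 (mem_product.1 hx).2
  rwa [Nat.card_Icc, Nat.add_sub_cancel] at hcard

theorem mismatch_add_mismatch_add_sum_le (hq : 2 ≤ q) (hR : Rplus p q a = Rminus p q a)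
    (hRp : Rminus p q a ≤ p) :
    mismatch p a (p + 1) + mismatch p a (p + q)
      + ∑ j ∈ Icc (p + 2) (p + q - 1), mismatch p a j ≤ 2 * p := by
  have h := Rplus_add_Rminus_eq_sum_mismatch p q a
  rw [sum_Icc_eq_add_add_sum_Icc _ hq] at h
  omega

theorem p_add_one_le_mismatch_add_mismatch (hs : s ∈ Icc 1 p) (hsl : a (p + q) < a s)
    (hsu : a s < a (p + 1)) : p + 1 ≤ mismatch p a (p + 1) + mismatch p a (p + q) := by
  have h :=
    card_add_one_le_card_filter_ne_add_card_filter_ne (hsl.trans hsu).ne' hs hsu.ne hsl.ne'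
  rwa [Nat.card_Icc, Nat.add_sub_cancel] at h

theorem Rminus_lt_Rplus_of_forall_ne_eq_first (hq : 1 ≤ q) (hqp : q ≤ p)
    (hcol : ∀ i j, p + 1 ≤ i → i ≤ j → j ≤ p + q → a j ≤ a i) (hs : s ∈ Icc 1 p)
    (hsl : a (p + q) < a s) (hsu : a s < a (p + 1)) {r : ℕ}
    (hr : ∀ i ∈ Icc 1 p, i ≠ r → a i = a (p + 1)) : Rminus p q a < Rplus p q a := by
  have hsr : s = r := by
    by_contra h
    exact hsu.ne (hr s hs h)
  have hlow : ∀ i ∈ Icc 1 p, a (p + q) < a i := by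
    intro i hi
    rcases eq_or_ne i r with rfl | hir
    · rwa [← hsr]
    · rw [hr i hi hir]
      exact hsl.trans hsu
  have hRplus : p ≤ Rplus p q a := by
    simpa using mul_card_le_Rplus (u := {p + q}) (by simp; omega) fun i hi j hj =>
      mem_singleton.1 hj ▸ hlow i hi
  have hRminus : Rminus p q a ≤ #(Icc (p + 1) (p + q)) - 1 := by
    refine card_filter_product_le_card_sub_one (r := r) (j₀ := p + q) (by simp; omega) ?_
    intro x hx hlt
    obtain ⟨hi, hj⟩ := mem_product.1 hx
    refine ⟨?_, fun hj' => (hlow x.1 hi).asymm (hj' ▸ hlt)⟩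
    by_contra hir
    have := hcol (p + 1) x.2 le_rfl (mem_Icc.1 hj).1 (mem_Icc.1 hj).2
    rw [hr x.1 hi hir] at hlt
    linarith
  rw [Nat.card_Icc] at hRminus
  have := (mem_Icc.1 hs).1
  omega

theorem Rplus_lt_Rminus_of_forall_ne_eq_last (hq : 1 ≤ q) (hqp : q ≤ p)
    (hcol : ∀ i j, p + 1 ≤ i → i ≤ j → j ≤ p + q → a j ≤ a i) (hs : s ∈ Icc 1 p)
    (hsl : a (p + q) < a s) (hsu : a s < a (p + 1)) {r : ℕ}
    (hr : ∀ i ∈ Icc 1 p, i ≠ r → a i = a (p + q)) : Rplus p q a < Rminus p q a := by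
  have hsr : s = r := by
    by_contra h
    exact hsl.ne' (hr s hs h)
  have hhigh : ∀ i ∈ Icc 1 p, a i < a (p + 1) := by
    intro i hi
    rcases eq_or_ne i r with rfl | hir
    · rwa [← hsr]
    · rw [hr i hi hir]
      exact hsl.trans hsu
  have hRminus : p ≤ Rminus p q a := by
    simpa using mul_card_le_Rminus (u := {p + 1}) (by simp; omega) fun i hi j hj =>
      mem_singleton.1 hj ▸ hhigh i hi
  have hRplus : Rplus p q a ≤ #(Icc (p + 1) (p + q)) - 1 := by
    refine card_filter_product_le_card_sub_one (r := r) (j₀ := p + 1) (by simp; omega) ?_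
    intro x hx hlt
    obtain ⟨hi, hj⟩ := mem_product.1 hx
    refine ⟨?_, fun hj' => (hhigh x.1 hi).asymm (hj' ▸ hlt)⟩
    by_contra hir
    have := hcol x.2 (p + q) (mem_Icc.1 hj).1 (mem_Icc.1 hj).2 le_rfl
    rw [hr x.1 hi hir] at hlt
    linarith
  rw [Nat.card_Icc] at hRplus
  have := (mem_Icc.1 hs).1
  omega

theorem one_le_mismatch {i i' : ℕ} (hi : i ∈ Icc 1 p) (hi' : i' ∈ Icc 1 p)
    (hne : a i ≠ a i') (j : ℕ) : 1 ≤ mismatch p a j := by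
  refine card_pos.2 ?_
  by_cases h : a i = a j
  · exact ⟨i', mem_filter.2 ⟨hi', fun h' => hne (h.trans h'.symm)⟩⟩
  · exact ⟨i, mem_filter.2 ⟨hi, h⟩⟩

theorem sub_one_le_mismatch {r j : ℕ} {v : ℝ} (hr : ∀ i ∈ Icc 1 p, i ≠ r → a i = v)
    (hv : v ≠ a j) : p - 1 ≤ mismatch p a j := by
  have hsub : (Icc 1 p).erase r ⊆ {i ∈ Icc 1 p | a i ≠ a j} := fun i hi => by
    obtain ⟨hir, hi⟩ := mem_erase.1 hi
    exact mem_filter.2 ⟨hi, hr i hi hir ▸ hv⟩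
  have h := (pred_card_le_card_erase).trans (card_le_card hsub)
  rwa [Nat.card_Icc, Nat.add_sub_cancel] at h

theorem forall_eq_of_straddle (hp : 5 ≤ p) (hpq : p ≤ q) (hq : q ≠ p + 1)
    (hcol : ∀ i j, p + 1 ≤ i → i ≤ j → j ≤ p + q → a j ≤ a i)
    (hR : Rplus p q a = Rminus p q a) (hRp : Rminus p q a ≤ p) (hs : s ∈ Icc 1 p)
    (hsl : a (p + q) < a s) (hsu : a s < a (p + 1)) : ∀ i ∈ Icc 1 p, a i = a s := by
  by_contra! ⟨i₀, hi₀, hne⟩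
  have hpos := one_le_mismatch hi₀ hs hne
  have hbudget := mismatch_add_mismatch_add_sum_le (by omega) hR hRp
  have hends := p_add_one_le_mismatch_add_mismatch hs hsl hsu
  have hmid := card_nsmul_le_sum (Icc (p + 2) (p + q - 1)) (fun j => mismatch p a j) 1
    fun j _ => hpos j
  rw [Nat.card_Icc, smul_eq_mul, mul_one] at hmid
  have hqp : q = p := by omega
  subst q
  obtain ⟨j₀, hj₀, hlt⟩ := exists_lt_of_sum_lt (f := mismatch p a) (g := fun _ => 2)
    (s := Icc (p + 2) (p + p - 1)) (by rw [sum_const, Nat.card_Icc, smul_eq_mul]; omega)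
  obtain ⟨r, -, hr⟩ := exists_forall_ne_eq_of_card_filter_ne_eq_one
    (le_antisymm (Nat.le_of_lt_succ hlt) (hpos j₀))
  obtain ⟨hj₀l, hj₀u⟩ := mem_Icc.1 hj₀
  rcases (hcol (p + 1) j₀ le_rfl (by omega) (by omega)).lt_or_eq with htop | htop
  · rcases (hcol j₀ (p + p) (by omega) (by omega) le_rfl).lt_or_eq with hbot | hbot
    · have h₁ := sub_one_le_mismatch hr htop.ne
      have h₂ := sub_one_le_mismatch hr hbot.ne'
      omega
    · exact (Rplus_lt_Rminus_of_forall_ne_eq_last (by omega) le_rfl hcol hs hsl hsu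
        fun i hi hir => (hr i hi hir).trans hbot.symm).ne hR
  · exact (Rminus_lt_Rplus_of_forall_ne_eq_first (by omega) le_rfl hcol hs hsl hsu
      fun i hi hir => (hr i hi hir).trans htop).ne hR.symm

theorem Rminus_eq_of_forall_eq (hq : 1 ≤ q) (hRp : Rminus p q a ≤ p)
    (hrows : ∀ i ∈ Icc 1 p, a i = c) (hc : c < a (p + 1)) : Rminus p q a = p := by
  have h : p ≤ Rminus p q a := by
    simpa using mul_card_le_Rminus (u := {p + 1}) (by simp; omega) fun i hi j hj =>
      mem_singleton.1 hj ▸ hrows i hi ▸ hc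
  omega

theorem eq_of_forall_eq_of_mem_middle (hp : 1 ≤ p) (hR : Rplus p q a = Rminus p q a)
    (hRp : Rminus p q a ≤ p) (hrows : ∀ i ∈ Icc 1 p, a i = c) (hcl : a (p + q) < c)
    (hcu : c < a (p + 1)) {j : ℕ} (hj : j ∈ Icc (p + 2) (p + q - 1)) : a j = c := by
  obtain ⟨hjl, hju⟩ := mem_Icc.1 hj
  rcases lt_trichotomy (a j) c with hlt | heq | hgt
  · have h : p * #{j, p + q} ≤ Rplus p q a :=
      mul_card_le_Rplus (by intro x; simp; omega) fun i hi k hk => by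
        rw [hrows i hi]
        rcases mem_insert.1 hk with rfl | hk
        · exact hlt
        · exact mem_singleton.1 hk ▸ hcl
    rw [card_pair (by omega)] at h
    omega
  · exact heq
  · have h : p * #{p + 1, j} ≤ Rminus p q a :=
      mul_card_le_Rminus (by intro x; simp; omega) fun i hi k hk => by
        rw [hrows i hi]
        rcases mem_insert.1 hk with rfl | hk
        · exact hcu
        · exact mem_singleton.1 hk ▸ hgt
    rw [card_pair (by omega)] at h
    omega

end Tableau

/-- key uniqueness statement behind Theorem 1.2(2). Under
`5 ≤ p ≤ q`, `q ≠ p+1`, a dominant sequence with `R⁺(a) = R⁻(a) ≤ p` admitting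
an index `s` with `1 ≤ s ≤ p` and `a (p+1) > a s > a (p+q)` must satisfy
`a (p+1) > a 1 = a 2 = … = a p = a (p+2) = … = a (p+q-1) > a (p+q)`, and then
`R⁺(a) = R⁻(a) = p`. -/
theorem uniqueness_case2 (p q : ℕ) (a : ℕ → ℝ)
    (hp : 5 ≤ p) (hpq : p ≤ q) (hq : q ≠ p + 1)
    (hdom : Dominant p q a)
    (hR : Rplus p q a = Rminus p q a) (hRp : Rminus p q a ≤ p)
    (hs : ∃ s, 1 ≤ s ∧ s ≤ p ∧ a s < a (p + 1) ∧ a (p + q) < a s) :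
    a 1 < a (p + 1) ∧
    (∀ i, 1 ≤ i → i ≤ p → a i = a 1) ∧
    (∀ j, p + 2 ≤ j → j ≤ p + q - 1 → a j = a 1) ∧
    a (p + q) < a (p + q - 1) ∧
    Rplus p q a = p ∧ Rminus p q a = p := by
  obtain ⟨s, hs1, hsp, hsu, hsl⟩ := hs
  have hsI : s ∈ Icc 1 p := mem_Icc.2 ⟨hs1, hsp⟩
  have hrows := forall_eq_of_straddle hp hpq hq hdom.2 hR hRp hsI hsl hsu
  have h1 : a 1 = a s := hrows 1 (mem_Icc.2 ⟨le_rfl, by omega⟩)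
  have hmid : ∀ j, p + 2 ≤ j → j ≤ p + q - 1 → a j = a 1 := fun j hjl hju =>
    h1 ▸ eq_of_forall_eq_of_mem_middle (by omega) hR hRp hrows hsl hsu (mem_Icc.2 ⟨hjl, hju⟩)
  have hRm := Rminus_eq_of_forall_eq (by omega) hRp hrows hsu
  refine ⟨h1 ▸ hsu, fun i hil hiu => h1 ▸ hrows i (mem_Icc.2 ⟨hil, hiu⟩), hmid, ?_,
    hR.trans hRm, hRm⟩
  rw [hmid (p + q - 1) (by omega) le_rfl, h1]
  exact hsl
end

section
/- Assume p ≥ 3 and q ≥ 1, and suppose a_1 > a_2 = a_3 = … = a_{p−1} = a_{p+1} = a_{p+2} = … = a_{p+q} > a_p. Then the sequence a is dominant, R⁺(a) = R⁻(a) = q, and condition D₁(a) fails. -/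
/-- if `p ≥ 3`, `q ≥ 1` and
`a 1 > a 2 = … = a (p-1) = a (p+1) = … = a (p+q) > a p`, then `a` is dominant,
`R⁺(a) = R⁻(a) = q`, and `D₁(a)` fails. -/
theorem pattern_case1 (p q : ℕ) (a : ℕ → ℝ) (hp : 3 ≤ p) (hq : 1 ≤ q)
    (h1 : a 2 < a 1)
    (h2 : ∀ i, 2 ≤ i → i ≤ p - 1 → a i = a 2)
    (h3 : ∀ j, p + 1 ≤ j → j ≤ p + q → a j = a 2)
    (h4 : a p < a 2) :
    Dominant p q a ∧ Rplus p q a = q ∧ Rminus p q a = q ∧ ¬ D1 p q a := by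
  have hval : ∀ i, 1 ≤ i → i ≤ p → a i ≤ a 2 ∨ i = 1 := by
    intro i hi1 hip
    rcases Nat.eq_or_lt_of_le hi1 with h | h
    · right; omega
    · left
      rcases Nat.eq_or_lt_of_le hip with h' | h'
      · subst h'; exact le_of_lt h4
      · rw [h2 i (by omega) (by omega)]
  have hmid : ∀ i, 2 ≤ i → i ≤ p → a i ≤ a 2 := by
    intro i hi2 hip
    rcases Nat.eq_or_lt_of_le hip with h' | h'
    · subst h'; exact le_of_lt h4
    · rw [h2 i hi2 (by omega)]
  have hdom : Dominant p q a := by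
    constructor
    · intro i j hi hij hj
      rcases Nat.eq_or_lt_of_le hi with h | h
      · rcases Nat.eq_or_lt_of_le hij with h' | h'
        · rw [← h', ← h]
        · rw [← h]; exact le_trans (hmid j (by omega) hj) (le_of_lt h1)
      · -- i ≥ 2
        rcases Nat.eq_or_lt_of_le hj with h' | h'
        · subst h'
          rcases Nat.eq_or_lt_of_le hij with h'' | h''
          · rw [h'']
          · rw [h2 i (by omega) (by omega)]; exact le_of_lt h4
        · rw [h2 j (by omega) (by omega), h2 i (by omega) (by omega)]
    · intro i j hi hij hj
      rw [h3 j (by omega) hj, h3 i hi (by omega)]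
  have hcond1 : ∀ ij : ℕ × ℕ, ij ∈ Finset.Icc 1 p ×ˢ Finset.Icc (p + 1) (p + q) →
      ((a ij.2 < a ij.1) ↔ ij.1 = 1) := by
    intro ij hij
    simp only [Finset.mem_product, Finset.mem_Icc] at hij
    rw [h3 ij.2 hij.2.1 hij.2.2]
    constructor
    · intro h
      rcases hval ij.1 hij.1.1 hij.1.2 with h' | h'
      · exact absurd h (not_lt.mpr h')
      · exact h'
    · intro h; rw [h]; exact h1
  have hcond2 : ∀ ij : ℕ × ℕ, ij ∈ Finset.Icc 1 p ×ˢ Finset.Icc (p + 1) (p + q) →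
      ((a ij.1 < a ij.2) ↔ ij.1 = p) := by
    intro ij hij
    simp only [Finset.mem_product, Finset.mem_Icc] at hij
    rw [h3 ij.2 hij.2.1 hij.2.2]
    constructor
    · intro h
      by_contra hne
      rcases Nat.eq_or_lt_of_le hij.1.1 with h' | h'
      · rw [← h'] at h; exact absurd h (not_lt.mpr (le_of_lt h1))
      · rw [h2 ij.1 (by omega) (by omega)] at h; exact lt_irrefl _ h
    · intro h; rw [h]; exact h4
  have hset1 : ((Finset.Icc 1 p ×ˢ Finset.Icc (p + 1) (p + q)).filter
      (fun ij => a ij.2 < a ij.1)) = {1} ×ˢ Finset.Icc (p + 1) (p + q) := by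
    ext ij
    simp only [Finset.mem_filter, Finset.mem_product, Finset.mem_Icc, Finset.mem_singleton]
    constructor
    · rintro ⟨hm, hc⟩
      have := (hcond1 ij (by simp only [Finset.mem_product, Finset.mem_Icc]; exact hm)).mp hc
      exact ⟨this, hm.2⟩
    · rintro ⟨he, hm⟩
      refine ⟨⟨⟨by omega, by omega⟩, hm⟩, ?_⟩
      exact (hcond1 ij (by simp only [Finset.mem_product, Finset.mem_Icc]; exact ⟨⟨by omega, by omega⟩, hm⟩)).mpr he
  have hset2 : ((Finset.Icc 1 p ×ˢ Finset.Icc (p + 1) (p + q)).filter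
      (fun ij => a ij.1 < a ij.2)) = {p} ×ˢ Finset.Icc (p + 1) (p + q) := by
    ext ij
    simp only [Finset.mem_filter, Finset.mem_product, Finset.mem_Icc, Finset.mem_singleton]
    constructor
    · rintro ⟨hm, hc⟩
      have := (hcond2 ij (by simp only [Finset.mem_product, Finset.mem_Icc]; exact hm)).mp hc
      exact ⟨this, hm.2⟩
    · rintro ⟨he, hm⟩
      refine ⟨⟨⟨by omega, by omega⟩, hm⟩, ?_⟩
      exact (hcond2 ij (by simp only [Finset.mem_product, Finset.mem_Icc]; exact ⟨⟨by omega, by omega⟩, hm⟩)).mpr he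
  have hcard : (Finset.Icc (p + 1) (p + q)).card = q := by
    rw [Nat.card_Icc]; omega
  refine ⟨hdom, ?_, ?_, ?_⟩
  · rw [Rplus, hset1, Finset.card_product, Finset.card_singleton, hcard, one_mul]
  · rw [Rminus, hset2, Finset.card_product, Finset.card_singleton, hcard, one_mul]
  · rintro (h | ⟨l, hl1, hl2, hl3, hl4⟩ | h)
    · rw [h3 (p + 1) le_rfl (by omega)] at h; exact absurd h (not_le.mpr h4)
    · rw [h3 l hl1 (by omega)] at hl3
      exact absurd hl3 (not_le.mpr h1)
    · rw [h3 (p + q) (by omega) le_rfl] at h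
      exact absurd h (not_le.mpr h1)
end

section
/- Assume p ≥ 1 and q ≥ 3, and suppose a_{p+1} > a_1 = a_2 = … = a_p = a_{p+2} = … = a_{p+q−1} > a_{p+q}. Then the sequence a is dominant, R⁺(a) = R⁻(a) = p, and condition D₂(a) fails. -/
/-- if `p ≥ 1`, `q ≥ 3` and
`a (p+1) > a 1 = a 2 = … = a p = a (p+2) = … = a (p+q-1) > a (p+q)`, then `a`
is dominant, `R⁺(a) = R⁻(a) = p`, and `D₂(a)` fails. -/
theorem pattern_case2 (p q : ℕ) (a : ℕ → ℝ) (hp : 1 ≤ p) (hq : 3 ≤ q)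
    (h1 : a 1 < a (p + 1))
    (h2 : ∀ i, 1 ≤ i → i ≤ p → a i = a 1)
    (h3 : ∀ j, p + 2 ≤ j → j ≤ p + q - 1 → a j = a 1)
    (h4 : a (p + q) < a 1) :
    Dominant p q a ∧ Rplus p q a = p ∧ Rminus p q a = p ∧ ¬ D2 p q a := by
  have hmid : ∀ j, p + 2 ≤ j → j ≤ p + q → j ≠ p + q → a j = a 1 := by
    intro j hj hj2 hj3
    exact h3 j hj (by omega)
  refine ⟨⟨?_, ?_⟩, ?_, ?_, ?_⟩
  · intro i j hi hij hjp
    rw [h2 i hi (le_trans hij hjp), h2 j (le_trans hi hij) hjp]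
  · intro i j hi hij hj
    rcases eq_or_lt_of_le hij with rfl | hij'
    · exact le_refl _
    by_cases hjq : j = p + q
    · subst hjq
      by_cases hip : i = p + 1
      · subst hip; linarith
      · rw [hmid i (by omega) (by omega) (by omega)]; linarith
    · rw [hmid j (by omega) hj hjq]
      by_cases hip : i = p + 1
      · subst hip; linarith
      · rw [hmid i (by omega) (by omega) (by omega)]
  · have hset : ((Finset.Icc 1 p ×ˢ Finset.Icc (p + 1) (p + q)).filter
        (fun ij => a ij.2 < a ij.1)) = Finset.Icc 1 p ×ˢ {p + q} := by
      ext ⟨i, j⟩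
      simp only [Finset.mem_filter, Finset.mem_product, Finset.mem_Icc, Finset.mem_singleton]
      constructor
      · rintro ⟨⟨⟨hi1, hi2⟩, hj1, hj2⟩, hlt⟩
        refine ⟨⟨hi1, hi2⟩, ?_⟩
        by_contra hjq
        rw [h2 i hi1 hi2] at hlt
        by_cases hjp : j = p + 1
        · subst hjp; linarith
        · rw [hmid j (by omega) hj2 hjq] at hlt; linarith
      · rintro ⟨⟨hi1, hi2⟩, rfl⟩
        exact ⟨⟨⟨hi1, hi2⟩, by omega, le_refl _⟩, by show a _ < a _; rw [h2 i hi1 hi2]; linarith⟩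
    rw [Rplus, hset, Finset.card_product, Finset.card_singleton, Nat.card_Icc]
    omega
  · have hset : ((Finset.Icc 1 p ×ˢ Finset.Icc (p + 1) (p + q)).filter
        (fun ij => a ij.1 < a ij.2)) = Finset.Icc 1 p ×ˢ {p + 1} := by
      ext ⟨i, j⟩
      simp only [Finset.mem_filter, Finset.mem_product, Finset.mem_Icc, Finset.mem_singleton]
      constructor
      · rintro ⟨⟨⟨hi1, hi2⟩, hj1, hj2⟩, hlt⟩
        refine ⟨⟨hi1, hi2⟩, ?_⟩
        by_contra hjp
        rw [h2 i hi1 hi2] at hlt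
        by_cases hjq : j = p + q
        · subst hjq; linarith
        · rw [hmid j (by omega) hj2 hjq] at hlt; linarith
      · rintro ⟨⟨hi1, hi2⟩, rfl⟩
        exact ⟨⟨⟨hi1, hi2⟩, le_refl _, by omega⟩, by show a _ < a _; rw [h2 i hi1 hi2]; linarith⟩
    rw [Rminus, hset, Finset.card_product, Finset.card_singleton, Nat.card_Icc]
    omega
  · rintro (h | ⟨l, hl1, hl2, hl3, hl4⟩ | h)
    · linarith
    · rw [h2 l hl1 (by omega)] at hl3; linarith
    · rw [h2 p hp le_rfl] at h; linarith
end

section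
/- Assume 5 ≤ p ≤ q, the sequence a is dominant, R⁺(a) = R⁻(a) ≤ q, and s is an index with p+1 ≤ s ≤ p+q and a_1 > a_s > a_p. If at most 2 indices j with p+1 ≤ j ≤ p+q satisfy a_j ≠ a_s, then in fact a_j = a_s for every j with p+1 ≤ j ≤ p+q, a_i = a_s for every i with 2 ≤ i ≤ p−1, a_1 > a_s, and a_s > a_p. (This is the branch of the proof of Theorem 1.2 in which l+n ≤ 2, forcing x = z = 1, y = p−2, l = n = 0 and m = q.) -/
/-- the branch `l+n ≤ 2` in the proof of Theorem 1.2. If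
`5 ≤ p ≤ q`, `a` is dominant with `R⁺(a) = R⁻(a) ≤ q`, `p+1 ≤ s ≤ p+q` with
`a 1 > a s > a p`, and at most `2` indices `j` with `p+1 ≤ j ≤ p+q` satisfy
`a j ≠ a s`, then all such `a j` equal `a s`, `a i = a s` for `2 ≤ i ≤ p-1`,
`a 1 > a s` and `a s > a p`. -/
theorem branch_ln_le_two (p q : ℕ) (a : ℕ → ℝ)
    (hp : 5 ≤ p) (hpq : p ≤ q)
    (hdom : Dominant p q a)
    (hR : Rplus p q a = Rminus p q a) (hRq : Rminus p q a ≤ q)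
    (s : ℕ) (hs1 : p + 1 ≤ s) (hs2 : s ≤ p + q)
    (hs3 : a s < a 1) (hs4 : a p < a s)
    (hfew : (((Finset.Icc (p + 1) (p + q)).filter (fun j => a j ≠ a s)).card ≤ 2)) :
    (∀ j, p + 1 ≤ j → j ≤ p + q → a j = a s) ∧
    (∀ i, 2 ≤ i → i ≤ p - 1 → a i = a s) ∧
    a s < a 1 ∧ a p < a s := by
  classical
  obtain ⟨h1, h2⟩ := hdom
  have hq5 : 5 ≤ q := le_trans hp hpq
  set J : Finset ℕ := Finset.Icc (p + 1) (p + q) with hJ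
  set M : Finset ℕ := J.filter (fun j => a j = a s) with hMdef
  have hJcard : J.card = q := by
    rw [hJ, Nat.card_Icc]; omega
  have hMB : M.card + (J.filter (fun j => ¬ a j = a s)).card = J.card :=
    Finset.card_filter_add_card_filter_not (p := fun j => a j = a s)
  have hfew' : (J.filter (fun j => ¬ a j = a s)).card ≤ 2 := by
    convert hfew using 2
  have hMcard : q - 2 ≤ M.card := by omega
  -- membership of M
  have hMmem : ∀ j ∈ M, j ∈ J ∧ a j = a s := by
    intro j hj; exact Finset.mem_filter.mp hj
  -- lower bound helpers
  have hRplus_ge : ∀ U : Finset (ℕ × ℕ),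
      (∀ x ∈ U, x.1 ∈ Finset.Icc 1 p ∧ x.2 ∈ J ∧ a x.2 < a x.1) →
      U.card ≤ Rplus p q a := by
    intro U hU
    apply Finset.card_le_card
    intro x hx
    obtain ⟨hx1, hx2, hx3⟩ := hU x hx
    simp only [Rplus, Finset.mem_filter, Finset.mem_product]
    exact ⟨⟨hx1, hx2⟩, hx3⟩
  have hRminus_ge : ∀ U : Finset (ℕ × ℕ),
      (∀ x ∈ U, x.1 ∈ Finset.Icc 1 p ∧ x.2 ∈ J ∧ a x.1 < a x.2) →
      U.card ≤ Rminus p q a := by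
    intro U hU
    apply Finset.card_le_card
    intro x hx
    obtain ⟨hx1, hx2, hx3⟩ := hU x hx
    simp only [Rminus, Finset.mem_filter, Finset.mem_product]
    exact ⟨⟨hx1, hx2⟩, hx3⟩
  -- Step 1: middle indices
  have hmid : ∀ i, 2 ≤ i → i ≤ p - 1 → a i = a s := by
    intro i hi1 hi2
    by_contra hne
    rcases lt_or_gt_of_ne hne with hlt | hgt
    · -- a i < a s : use rows p-1, p against M in Rminus
      have hap1 : a (p - 1) ≤ a i := h1 i (p - 1) (by omega) hi2 (by omega)
      have hap : a p ≤ a (p - 1) := h1 (p - 1) p (by omega) (by omega) le_rfl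
      have hcard : ({p - 1, p} : Finset ℕ).card = 2 := by
        rw [Finset.card_insert_of_notMem (by simp; omega), Finset.card_singleton]
      have hU := hRminus_ge (({p - 1, p} : Finset ℕ) ×ˢ M) ?_
      · rw [Finset.card_product, hcard] at hU
        omega
      · rintro ⟨i', j'⟩ hx
        rw [Finset.mem_product] at hx
        obtain ⟨hx1, hx2⟩ := hx
        obtain ⟨hxJ, hxs⟩ := hMmem _ hx2
        simp only [Finset.mem_insert, Finset.mem_singleton] at hx1
        refine ⟨by rw [Finset.mem_Icc]; omega, hxJ, ?_⟩
        rcases hx1 with h | h <;> rw [h, hxs] <;> linarith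
    · -- a i > a s : use rows 1, 2 against M in Rplus
      have ha2 : a s < a 2 := lt_of_lt_of_le hgt (h1 2 i (by omega) hi1 (by omega))
      have hcard : ({1, 2} : Finset ℕ).card = 2 := by decide
      have hU := hRplus_ge (({1, 2} : Finset ℕ) ×ˢ M) ?_
      · rw [Finset.card_product, hcard] at hU
        omega
      · rintro ⟨i', j'⟩ hx
        rw [Finset.mem_product] at hx
        obtain ⟨hx1, hx2⟩ := hx
        obtain ⟨hxJ, hxs⟩ := hMmem _ hx2
        simp only [Finset.mem_insert, Finset.mem_singleton] at hx1
        refine ⟨by rw [Finset.mem_Icc]; omega, hxJ, ?_⟩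
        rcases hx1 with h | h <;> rw [h, hxs] <;> linarith
  -- Step 2: bottom indices
  have hbot : ∀ j, p + 1 ≤ j → j ≤ p + q → a j = a s := by
    intro j hj1 hj2
    by_contra hne
    have hjJ : j ∈ J := by rw [hJ, Finset.mem_Icc]; omega
    rcases lt_or_gt_of_ne hne with hlt | hgt
    · -- a j < a s : Rplus ≥ (p-1) + M.card
      have hdisj : Disjoint ((Finset.Icc 1 (p - 1)) ×ˢ ({j} : Finset ℕ))
          (({1} : Finset ℕ) ×ˢ M) := by
        rw [Finset.disjoint_left]
        rintro ⟨i', j'⟩ hx hy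
        rw [Finset.mem_product, Finset.mem_singleton] at hx hy
        obtain ⟨_, hys⟩ := hMmem _ hy.2
        rw [hx.2] at hys
        exact absurd hys (by linarith)
      have hU := hRplus_ge ((Finset.Icc 1 (p - 1)) ×ˢ ({j} : Finset ℕ) ∪
          ({1} : Finset ℕ) ×ˢ M) ?_
      · rw [Finset.card_union_of_disjoint hdisj, Finset.card_product,
          Finset.card_product, Finset.card_singleton, Finset.card_singleton,
          Nat.card_Icc] at hU
        omega
      · rintro ⟨i', j'⟩ hx
        rw [Finset.mem_union, Finset.mem_product, Finset.mem_product] at hx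
        rcases hx with ⟨hx1, hx2⟩ | ⟨hx1, hx2⟩
        · rw [Finset.mem_Icc] at hx1
          rw [Finset.mem_singleton] at hx2
          subst hx2
          refine ⟨by rw [Finset.mem_Icc]; omega, hjJ, ?_⟩
          rcases eq_or_lt_of_le hx1.1 with h | h
          · rw [← h]; linarith
          · rw [hmid i' (by omega) hx1.2]; linarith
        · rw [Finset.mem_singleton] at hx1
          obtain ⟨hxJ, hxs⟩ := hMmem _ hx2
          subst hx1
          exact ⟨by rw [Finset.mem_Icc]; omega, hxJ, by rw [hxs]; linarith⟩
    · -- a j > a s : Rminus ≥ (p-1) + M.card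
      have hdisj : Disjoint ((Finset.Icc 2 p) ×ˢ ({j} : Finset ℕ))
          (({p} : Finset ℕ) ×ˢ M) := by
        rw [Finset.disjoint_left]
        rintro ⟨i', j'⟩ hx hy
        rw [Finset.mem_product, Finset.mem_singleton] at hx hy
        obtain ⟨_, hys⟩ := hMmem _ hy.2
        rw [hx.2] at hys
        exact absurd hys (by linarith)
      have hU := hRminus_ge ((Finset.Icc 2 p) ×ˢ ({j} : Finset ℕ) ∪
          ({p} : Finset ℕ) ×ˢ M) ?_
      · rw [Finset.card_union_of_disjoint hdisj, Finset.card_product,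
          Finset.card_product, Finset.card_singleton, Finset.card_singleton,
          Nat.card_Icc] at hU
        omega
      · rintro ⟨i', j'⟩ hx
        rw [Finset.mem_union, Finset.mem_product, Finset.mem_product] at hx
        rcases hx with ⟨hx1, hx2⟩ | ⟨hx1, hx2⟩
        · rw [Finset.mem_Icc] at hx1
          rw [Finset.mem_singleton] at hx2
          subst hx2
          refine ⟨by rw [Finset.mem_Icc]; omega, hjJ, ?_⟩
          rcases eq_or_lt_of_le hx1.2 with h | h
          · rw [h]; linarith
          · rw [hmid i' hx1.1 (by omega)]; linarith
        · rw [Finset.mem_singleton] at hx1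
          obtain ⟨hxJ, hxs⟩ := hMmem _ hx2
          subst hx1
          exact ⟨by rw [Finset.mem_Icc]; omega, hxJ, by rw [hxs]; linarith⟩
  exact ⟨hbot, hmid, hs3, hs4⟩
end

section
/- Assume 5 ≤ p ≤ q ≤ 2p−3, the sequence a is dominant, R⁺(a) = R⁻(a) ≤ q, and s is an index with p+1 ≤ s ≤ p+q and a_1 > a_s > a_p. Then at least 3 indices j with p+1 ≤ j ≤ p+q satisfy a_j ≥ a_s. (This is the elimination of the branch l+m ≤ 2 in the proof of Theorem 1.2(1).) -/
/-- elimination of the branch `l+m ≤ 2` in the proof of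
Theorem 1.2(1): at least `3` indices `j` with `p+1 ≤ j ≤ p+q` satisfy
`a j ≥ a s`. -/
theorem branch_lm_eliminated (p q : ℕ) (a : ℕ → ℝ)
    (hp : 5 ≤ p) (hpq : p ≤ q) (hq : q ≤ 2 * p - 3)
    (hdom : Dominant p q a)
    (hR : Rplus p q a = Rminus p q a) (hRq : Rminus p q a ≤ q)
    (s : ℕ) (hs1 : p + 1 ≤ s) (hs2 : s ≤ p + q)
    (hs3 : a s < a 1) (hs4 : a p < a s) :
    3 ≤ ((Finset.Icc (p + 1) (p + q)).filter (fun j => a s ≤ a j)).card := by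
  classical
  by_contra hcon
  push_neg at hcon
  obtain ⟨hdom1, hdom2⟩ := hdom
  set I : Finset ℕ := Finset.Icc 1 p with hI
  set S : Finset ℕ := Finset.Icc (p + 1) (p + q) with hS
  set M : Finset ℕ := S.filter (fun j => a s ≤ a j) with hM
  set M' : Finset ℕ := S.filter (fun j => a j < a s) with hM'
  set L : Finset ℕ := I.filter (fun i => a s ≤ a i) with hL
  set L' : Finset ℕ := I.filter (fun i => a i < a s) with hL'
  have hm2 : M.card ≤ 2 := by omega
  have hIcard : I.card = p := by rw [hI, Nat.card_Icc]; omega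
  have hScard : S.card = q := by rw [hS, Nat.card_Icc]; omega
  have hMM' : M.card + M'.card = q := by
    rw [hM, hM', ← hScard,
      ← Finset.card_filter_add_card_filter_not (s := S) (p := fun j => a s ≤ a j)]
    congr 2
    apply Finset.filter_congr
    intro j _
    simp [not_le]
  have hLL' : L.card + L'.card = p := by
    rw [hL, hL', ← hIcard,
      ← Finset.card_filter_add_card_filter_not (s := I) (p := fun i => a s ≤ a i)]
    congr 2
    apply Finset.filter_congr
    intro i _
    simp [not_le]
  have h1L : (1 : ℕ) ∈ L := by
    refine Finset.mem_filter.mpr ⟨Finset.mem_Icc.mpr ⟨le_refl 1, by omega⟩, hs3.le⟩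
  have hsM : s ∈ M :=
    Finset.mem_filter.mpr ⟨Finset.mem_Icc.mpr ⟨hs1, hs2⟩, le_refl _⟩
  have hp1M : p + 1 ∈ M :=
    Finset.mem_filter.mpr ⟨Finset.mem_Icc.mpr ⟨le_refl _, by omega⟩,
      hdom2 (p + 1) s le_rfl hs1 hs2⟩
  -- lower bound for Rplus
  have hRplus_lb : L.card * M'.card ≤ Rplus p q a := by
    rw [Rplus, ← Finset.card_product]
    apply Finset.card_le_card
    intro ij hij
    rw [Finset.mem_product] at hij
    obtain ⟨hi, hj⟩ := hij
    rw [hL, Finset.mem_filter] at hi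
    rw [hM', Finset.mem_filter] at hj
    exact Finset.mem_filter.mpr ⟨Finset.mem_product.mpr ⟨hi.1, hj.1⟩,
      lt_of_lt_of_le hj.2 hi.2⟩
  -- lower bound for Rminus
  have hRminus_lb : L'.card * M.card ≤ Rminus p q a := by
    rw [Rminus, ← Finset.card_product]
    apply Finset.card_le_card
    intro ij hij
    rw [Finset.mem_product] at hij
    obtain ⟨hi, hj⟩ := hij
    rw [hL', Finset.mem_filter] at hi
    rw [hM, Finset.mem_filter] at hj
    exact Finset.mem_filter.mpr ⟨Finset.mem_product.mpr ⟨hi.1, hj.1⟩,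
      lt_of_lt_of_le hi.2 hj.2⟩
  have hRplusq : Rplus p q a ≤ q := hR ▸ hRq
  have hL1 : L.card = 1 := by
    have hL1' : 1 ≤ L.card := Finset.card_pos.mpr ⟨1, h1L⟩
    by_contra hne
    have h2 : 2 ≤ L.card := by omega
    have : 2 * M'.card ≤ L.card * M'.card := Nat.mul_le_mul_right _ h2
    omega
  have hM1 : M.card = 1 := by
    have hM1' : 1 ≤ M.card := Finset.card_pos.mpr ⟨s, hsM⟩
    have hL'card : L'.card = p - 1 := by omega
    by_contra hne
    have h2 : 2 ≤ M.card := by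
      omega
    have : L'.card * 2 ≤ L'.card * M.card := Nat.mul_le_mul_left _ h2
    omega
  have hsp1 : s = p + 1 :=
    Finset.card_le_one.mp (le_of_eq hM1) s hsM (p + 1) hp1M
  -- every i in [2,p] has a i < a s
  have hLsmall : ∀ i : ℕ, 2 ≤ i → i ≤ p → a i < a s := by
    intro i h2 hip
    by_contra h
    push_neg at h
    have hiL : i ∈ L := Finset.mem_filter.mpr ⟨Finset.mem_Icc.mpr ⟨by omega, hip⟩, h⟩
    have := Finset.card_le_one.mp (le_of_eq hL1) i hiL 1 h1L
    omega
  -- every j in [p+2, p+q] has a j < a s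
  have hMsmall : ∀ j : ℕ, p + 2 ≤ j → j ≤ p + q → a j < a s := by
    intro j h2 hjq
    by_contra h
    push_neg at h
    have hjM : j ∈ M := Finset.mem_filter.mpr ⟨Finset.mem_Icc.mpr ⟨by omega, hjq⟩, h⟩
    have := Finset.card_le_one.mp (le_of_eq hM1) j hjM (p + 1) hp1M
    omega
  have ha1 : ∀ j : ℕ, p + 1 ≤ j → j ≤ p + q → a j < a 1 := by
    intro j hj1 hjq
    rcases Nat.eq_or_lt_of_le hj1 with h | h
    · rw [← h, ← hsp1] at *; exact hs3
    · exact lt_trans (hMsmall j (by omega) hjq) hs3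
  -- the tie rectangle
  set T : Finset (ℕ × ℕ) := Finset.Icc 2 p ×ˢ Finset.Icc (p + 2) (p + q) with hT
  set X : Finset (ℕ × ℕ) := T.filter (fun ij => a ij.1 < a ij.2) with hX
  set Y : Finset (ℕ × ℕ) := T.filter (fun ij => a ij.2 < a ij.1) with hY
  -- Rplus ≥ q + Y.card
  have hRplus_dec : q + Y.card ≤ Rplus p q a := by
    rw [Rplus]
    have hsub : ({1} ×ˢ S) ∪ Y ⊆
        (I ×ˢ S).filter (fun ij => a ij.2 < a ij.1) := by
      intro ij hij
      rcases Finset.mem_union.mp hij with h | h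
      · rw [Finset.mem_product, Finset.mem_singleton] at h
        refine Finset.mem_filter.mpr ⟨Finset.mem_product.mpr
          ⟨Finset.mem_Icc.mpr ⟨by omega, by omega⟩, h.2⟩, ?_⟩
        rw [h.1]
        rw [hS, Finset.mem_Icc] at *
        exact ha1 ij.2 h.2.1 h.2.2
      · rw [hY, Finset.mem_filter, hT, Finset.mem_product, Finset.mem_Icc,
          Finset.mem_Icc] at h
        refine Finset.mem_filter.mpr ⟨Finset.mem_product.mpr
          ⟨Finset.mem_Icc.mpr ⟨by omega, h.1.1.2⟩,
           Finset.mem_Icc.mpr ⟨by omega, h.1.2.2⟩⟩, h.2⟩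
    have hdisj : Disjoint ({1} ×ˢ S) Y := by
      rw [Finset.disjoint_left]
      intro ij h1 h2
      rw [Finset.mem_product, Finset.mem_singleton] at h1
      rw [hY, Finset.mem_filter, hT, Finset.mem_product, Finset.mem_Icc] at h2
      omega
    calc q + Y.card = (({1} ×ˢ S) ∪ Y).card := by
          rw [Finset.card_union_of_disjoint hdisj, Finset.card_product,
            Finset.card_singleton, one_mul, hScard]
      _ ≤ _ := Finset.card_le_card hsub
  -- Rminus ≤ (p-1) + X.card
  have hRminus_ub : Rminus p q a ≤ (p - 1) + X.card := by
    rw [Rminus]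
    have hsub : (I ×ˢ S).filter (fun ij => a ij.1 < a ij.2) ⊆
        (Finset.Icc 2 p ×ˢ {p + 1}) ∪ X := by
      intro ij hij
      rw [Finset.mem_filter, Finset.mem_product, hI, hS, Finset.mem_Icc,
        Finset.mem_Icc] at hij
      obtain ⟨⟨⟨hi1, hi2⟩, hj1, hj2⟩, hlt⟩ := hij
      have hi2' : 2 ≤ ij.1 := by
        rcases Nat.lt_or_ge ij.1 2 with h | h
        · exfalso
          have : ij.1 = 1 := by omega
          rw [this] at hlt
          exact absurd hlt (not_lt.mpr (ha1 ij.2 hj1 hj2).le)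
        · exact h
      rcases Nat.eq_or_lt_of_le hj1 with h | h
      · exact Finset.mem_union_left _ (Finset.mem_product.mpr
          ⟨Finset.mem_Icc.mpr ⟨hi2', hi2⟩, Finset.mem_singleton.mpr h.symm⟩)
      · exact Finset.mem_union_right _ (Finset.mem_filter.mpr
          ⟨Finset.mem_product.mpr ⟨Finset.mem_Icc.mpr ⟨hi2', hi2⟩,
            Finset.mem_Icc.mpr ⟨by omega, hj2⟩⟩, hlt⟩)
    calc ((I ×ˢ S).filter (fun ij => a ij.1 < a ij.2)).card
        ≤ ((Finset.Icc 2 p ×ˢ {p + 1}) ∪ X).card := Finset.card_le_card hsub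
      _ ≤ (Finset.Icc 2 p ×ˢ {p + 1}).card + X.card := Finset.card_union_le _ _
      _ = (p - 1) + X.card := by
          rw [Finset.card_product, Finset.card_singleton, mul_one, Nat.card_Icc]
          omega
  -- Rminus ≥ (p-1) + X.card
  have hRminus_lb2 : (p - 1) + X.card ≤ Rminus p q a := by
    rw [Rminus]
    have hsub : (Finset.Icc 2 p ×ˢ {p + 1}) ∪ X ⊆
        (I ×ˢ S).filter (fun ij => a ij.1 < a ij.2) := by
      intro ij hij
      rcases Finset.mem_union.mp hij with h | h
      · rw [Finset.mem_product, Finset.mem_Icc, Finset.mem_singleton] at h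
        refine Finset.mem_filter.mpr ⟨Finset.mem_product.mpr
          ⟨Finset.mem_Icc.mpr ⟨by omega, h.1.2⟩,
           Finset.mem_Icc.mpr ⟨by omega, by omega⟩⟩, ?_⟩
        rw [h.2, ← hsp1]
        exact hLsmall ij.1 h.1.1 h.1.2
      · rw [hX, Finset.mem_filter, hT, Finset.mem_product, Finset.mem_Icc,
          Finset.mem_Icc] at h
        refine Finset.mem_filter.mpr ⟨Finset.mem_product.mpr
          ⟨Finset.mem_Icc.mpr ⟨by omega, h.1.1.2⟩,
           Finset.mem_Icc.mpr ⟨by omega, h.1.2.2⟩⟩, h.2⟩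
    have hdisj : Disjoint (Finset.Icc 2 p ×ˢ {p + 1}) X := by
      rw [Finset.disjoint_left]
      intro ij h1 h2
      rw [Finset.mem_product, Finset.mem_singleton] at h1
      rw [hX, Finset.mem_filter, hT, Finset.mem_product, Finset.mem_Icc,
        Finset.mem_Icc] at h2
      omega
    calc (p - 1) + X.card = ((Finset.Icc 2 p ×ˢ {p + 1}) ∪ X).card := by
          rw [Finset.card_union_of_disjoint hdisj, Finset.card_product,
            Finset.card_singleton, mul_one, Nat.card_Icc]
          omega
      _ ≤ _ := Finset.card_le_card hsub
  -- consequences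
  have hY0 : Y.card = 0 := by omega
  have hXub : X.card ≤ q - p + 1 := by omega
  have hXlb : 1 ≤ X.card ∧ q - p + 1 ≤ X.card := by
    constructor <;> omega
  have hYempty : ∀ i j : ℕ, 2 ≤ i → i ≤ p → p + 2 ≤ j → j ≤ p + q → a i ≤ a j := by
    intro i j h1 h2 h3 h4
    by_contra h
    push_neg at h
    have : (i, j) ∈ Y := Finset.mem_filter.mpr
      ⟨Finset.mem_product.mpr ⟨Finset.mem_Icc.mpr ⟨h1, h2⟩,
        Finset.mem_Icc.mpr ⟨h3, h4⟩⟩, h⟩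
    have : 0 < Y.card := Finset.card_pos.mpr ⟨_, this⟩
    omega
  -- find a row i0 with no X-pair
  have himg : (X.image Prod.fst).card < (Finset.Icc 2 p).card := by
    have h1 : (X.image Prod.fst).card ≤ X.card := Finset.card_image_le
    rw [Nat.card_Icc]
    omega
  have hrow : ∃ i0 ∈ Finset.Icc 2 p, i0 ∉ X.image Prod.fst := by
    by_contra h
    push_neg at h
    have : (Finset.Icc 2 p) ⊆ X.image Prod.fst := h
    have := Finset.card_le_card this
    omega
  obtain ⟨i0, hi0mem, hi0⟩ := hrow
  rw [Finset.mem_Icc] at hi0mem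
  have hi0all : ∀ j : ℕ, p + 2 ≤ j → j ≤ p + q → a j = a i0 := by
    intro j h1 h2
    have hle : a i0 ≤ a j := hYempty i0 j hi0mem.1 hi0mem.2 h1 h2
    have hnlt : ¬ a i0 < a j := by
      intro hlt
      apply hi0
      refine Finset.mem_image.mpr ⟨(i0, j), ?_, rfl⟩
      exact Finset.mem_filter.mpr ⟨Finset.mem_product.mpr
        ⟨Finset.mem_Icc.mpr hi0mem, Finset.mem_Icc.mpr ⟨h1, h2⟩⟩, hlt⟩
    linarith
  -- take a witness pair in X
  have hXne : X.Nonempty := Finset.card_pos.mp (by omega)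
  obtain ⟨⟨i1, j1⟩, hij1⟩ := hXne
  rw [hX, Finset.mem_filter, hT, Finset.mem_product, Finset.mem_Icc,
    Finset.mem_Icc] at hij1
  obtain ⟨⟨⟨hi11, hi12⟩, hj11, hj12⟩, hlt1⟩ := hij1
  -- then the whole row i1 lies in X
  have hrowX : ({i1} ×ˢ Finset.Icc (p + 2) (p + q)) ⊆ X := by
    intro ij hij
    rw [Finset.mem_product, Finset.mem_singleton, Finset.mem_Icc] at hij
    refine Finset.mem_filter.mpr ⟨Finset.mem_product.mpr
      ⟨Finset.mem_Icc.mpr ⟨by omega, by omega⟩, Finset.mem_Icc.mpr hij.2⟩, ?_⟩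
    rw [hij.1]
    calc a i1 < a j1 := hlt1
      _ = a i0 := hi0all j1 hj11 hj12
      _ = a ij.2 := (hi0all ij.2 hij.2.1 hij.2.2).symm
  have hrowcard : q - 1 ≤ X.card := by
    have := Finset.card_le_card hrowX
    rw [Finset.card_product, Finset.card_singleton, one_mul, Nat.card_Icc] at this
    omega
  omega
end

section
/- Assume 5 ≤ p ≤ q ≤ 2p−3, the sequence a is dominant, R⁺(a) = R⁻(a) ≤ q, and s is an index with p+1 ≤ s ≤ p+q and a_1 > a_s > a_p. Then at least 3 indices j with p+1 ≤ j ≤ p+q satisfy a_j ≤ a_s. (This is the elimination of the branch m+n ≤ 2 in the proof of Theorem 1.2(1).) -/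
/-- elimination of the branch `m+n ≤ 2` in the proof of
Theorem 1.2(1): at least `3` indices `j` with `p+1 ≤ j ≤ p+q` satisfy
`a j ≤ a s`. -/
theorem branch_mn_eliminated (p q : ℕ) (a : ℕ → ℝ)
    (hp : 5 ≤ p) (hpq : p ≤ q) (hq : q ≤ 2 * p - 3)
    (hdom : Dominant p q a)
    (hR : Rplus p q a = Rminus p q a) (hRq : Rminus p q a ≤ q)
    (s : ℕ) (hs1 : p + 1 ≤ s) (hs2 : s ≤ p + q)
    (hs3 : a s < a 1) (hs4 : a p < a s) :
    3 ≤ ((Finset.Icc (p + 1) (p + q)).filter (fun j => a j ≤ a s)).card := by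
  by_contra hM
  push_neg at hM
  obtain ⟨hdom1, hdom2⟩ := hdom
  have hq5 : 5 ≤ q := le_trans hp hpq
  -- basic product lower bounds
  have hprodM : ∀ (A B : Finset ℕ), A ⊆ Finset.Icc 1 p → B ⊆ Finset.Icc (p+1) (p+q) →
      (∀ i ∈ A, ∀ j ∈ B, a i < a j) → A.card * B.card ≤ Rminus p q a := by
    intro A B hA hB h
    rw [Rminus, ← Finset.card_product]
    apply Finset.card_le_card
    rintro ⟨i, j⟩ hij
    rw [Finset.mem_product] at hij
    rw [Finset.mem_filter, Finset.mem_product]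
    exact ⟨⟨hA hij.1, hB hij.2⟩, h i hij.1 j hij.2⟩
  have hprodP : ∀ (A B : Finset ℕ), A ⊆ Finset.Icc 1 p → B ⊆ Finset.Icc (p+1) (p+q) →
      (∀ i ∈ A, ∀ j ∈ B, a j < a i) → A.card * B.card ≤ Rplus p q a := by
    intro A B hA hB h
    rw [Rplus, ← Finset.card_product]
    apply Finset.card_le_card
    rintro ⟨i, j⟩ hij
    rw [Finset.mem_product] at hij
    rw [Finset.mem_filter, Finset.mem_product]
    exact ⟨⟨hA hij.1, hB hij.2⟩, h i hij.1 j hij.2⟩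
  set S := (Finset.Icc (p + 1) (p + q)).filter (fun j => a j ≤ a s) with hSdef
  set T := (Finset.Icc (p + 1) (p + q)).filter (fun j => a s < a j) with hTdef
  have hcard2 : (Finset.Icc (p+1) (p+q)).card = q := by
    rw [Nat.card_Icc]; omega
  have hST : S.card + T.card = q := by
    have h1 : T = (Finset.Icc (p+1) (p+q)).filter (fun j => ¬ (a j ≤ a s)) := by
      simp only [hTdef, not_le]
    rw [hSdef, h1, Finset.card_filter_add_card_filter_not, hcard2]
  have hsS : s ∈ S := by
    rw [hSdef, Finset.mem_filter, Finset.mem_Icc]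
    exact ⟨⟨hs1, hs2⟩, le_refl _⟩
  have hS1 : 1 ≤ S.card := Finset.card_pos.mpr ⟨s, hsS⟩
  have hTcard : q - 2 ≤ T.card := by omega
  set U := (Finset.Icc 1 p).filter (fun i => a i ≤ a s) with hUdef
  set K := (Finset.Icc 1 p).filter (fun i => a s < a i) with hKdef
  have hcard1 : (Finset.Icc 1 p).card = p := by rw [Nat.card_Icc]; omega
  have hUK : U.card + K.card = p := by
    have h1 : K = (Finset.Icc 1 p).filter (fun i => ¬ (a i ≤ a s)) := by
      simp only [hKdef, not_le]
    rw [hUdef, h1, Finset.card_filter_add_card_filter_not, hcard1]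
  have hpU : p ∈ U := by
    rw [hUdef, Finset.mem_filter, Finset.mem_Icc]
    exact ⟨⟨by omega, le_refl _⟩, le_of_lt hs4⟩
  have hU1 : 1 ≤ U.card := Finset.card_pos.mpr ⟨p, hpU⟩
  -- Step 1: U.card = 1
  have hUT : U.card * T.card ≤ Rminus p q a := by
    apply hprodM U T (Finset.filter_subset _ _) (Finset.filter_subset _ _)
    intro i hi j hj
    rw [hUdef, Finset.mem_filter] at hi
    rw [hTdef, Finset.mem_filter] at hj
    exact lt_of_le_of_lt hi.2 hj.2
  have hU : U.card = 1 := by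
    by_contra h
    have h2 : 2 ≤ U.card := by omega
    have := Nat.mul_le_mul h2 hTcard
    have := le_trans this hUT
    omega
  have hUeq : U = {p} := by
    obtain ⟨x, hx⟩ := Finset.card_eq_one.mp hU
    rw [hx] at hpU
    rw [Finset.mem_singleton] at hpU
    rw [hx, hpU]
  have hKmem : ∀ i, 1 ≤ i → i ≤ p → i ≠ p → a s < a i := by
    intro i h1 h2 h3
    by_contra h
    push_neg at h
    have : i ∈ U := by
      rw [hUdef, Finset.mem_filter, Finset.mem_Icc]
      exact ⟨⟨h1, h2⟩, h⟩
    rw [hUeq, Finset.mem_singleton] at this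
    exact h3 this
  -- Step 2: S.card = 1
  have hKS : K.card * S.card ≤ Rplus p q a := by
    apply hprodP K S (Finset.filter_subset _ _) (Finset.filter_subset _ _)
    intro i hi j hj
    rw [hKdef, Finset.mem_filter] at hi
    rw [hSdef, Finset.mem_filter] at hj
    exact lt_of_le_of_lt hj.2 hi.2
  have hKcard : K.card = p - 1 := by omega
  have hScard : S.card = 1 := by
    by_contra h
    have h2 : 2 ≤ S.card := by omega
    have := Nat.mul_le_mul (le_refl K.card) h2
    have := le_trans this hKS
    rw [hR] at this
    omega
  have hSeq : S = {s} := by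
    obtain ⟨x, hx⟩ := Finset.card_eq_one.mp hScard
    rw [hx] at hsS
    rw [Finset.mem_singleton] at hsS
    rw [hx, hsS]
  have hSmem : ∀ j, p + 1 ≤ j → j ≤ p + q → j ≠ s → a s < a j := by
    intro j h1 h2 h3
    by_contra h
    push_neg at h
    have : j ∈ S := by
      rw [hSdef, Finset.mem_filter, Finset.mem_Icc]
      exact ⟨⟨h1, h2⟩, h⟩
    rw [hSeq, Finset.mem_singleton] at this
    exact h3 this
  -- Step 3: Rminus = q and the Rminus set is exactly {p} ×ˢ Icc
  set Rset := ((Finset.Icc 1 p ×ˢ Finset.Icc (p + 1) (p + q)).filter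
    (fun ij => a ij.1 < a ij.2)) with hRsetdef
  have hsub : ({p} : Finset ℕ) ×ˢ Finset.Icc (p+1) (p+q) ⊆ Rset := by
    rintro ⟨i, j⟩ hij
    rw [Finset.mem_product, Finset.mem_singleton] at hij
    rw [hRsetdef, Finset.mem_filter, Finset.mem_product]
    have hj := hij.2
    rw [Finset.mem_Icc] at hj
    refine ⟨⟨by rw [Finset.mem_Icc]; omega, hij.2⟩, ?_⟩
    rw [hij.1]
    rcases eq_or_ne j s with rfl | hne
    · exact hs4
    · exact lt_trans hs4 (hSmem j hj.1 hj.2 hne)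
  have hsubcard : (({p} : Finset ℕ) ×ˢ Finset.Icc (p+1) (p+q)).card = q := by
    rw [Finset.card_product, Finset.card_singleton, one_mul, hcard2]
  have hRminusq : Rminus p q a = q := by
    have h1 : q ≤ Rminus p q a := by
      have h2 : (({p} : Finset ℕ) ×ˢ Finset.Icc (p+1) (p+q)).card ≤ Rset.card :=
        Finset.card_le_card hsub
      rw [hsubcard] at h2
      exact h2
    omega
  have hRseteq : ({p} : Finset ℕ) ×ˢ Finset.Icc (p+1) (p+q) = Rset := by
    apply Finset.eq_of_subset_of_card_le hsub
    rw [hsubcard]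
    have : Rset.card = Rminus p q a := rfl
    omega
  have h3 : ∀ i, 1 ≤ i → i ≤ p → i ≠ p → ∀ j, p + 1 ≤ j → j ≤ p + q → a j ≤ a i := by
    intro i h1 h2 hne j hj1 hj2
    by_contra h
    push_neg at h
    have : (i, j) ∈ Rset := by
      rw [hRsetdef, Finset.mem_filter, Finset.mem_product, Finset.mem_Icc, Finset.mem_Icc]
      exact ⟨⟨⟨h1, h2⟩, ⟨hj1, hj2⟩⟩, h⟩
    rw [← hRseteq, Finset.mem_product, Finset.mem_singleton] at this
    exact hne this.1
  -- Step 4: analyze Rplus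
  set Pset := ((Finset.Icc 1 p ×ˢ Finset.Icc (p + 1) (p + q)).filter
    (fun ij => a ij.2 < a ij.1)) with hPsetdef
  set K' := (Finset.Icc 1 p).erase p with hK'def
  have hK'card : K'.card = p - 1 := by
    rw [hK'def, Finset.card_erase_of_mem, hcard1]
    rw [Finset.mem_Icc]; omega
  have hK'mem : ∀ i ∈ K', 1 ≤ i ∧ i ≤ p ∧ i ≠ p := by
    intro i hi
    rw [hK'def, Finset.mem_erase, Finset.mem_Icc] at hi
    exact ⟨hi.2.1, hi.2.2, hi.1⟩
  have hKs_sub : K' ×ˢ ({s} : Finset ℕ) ⊆ Pset := by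
    rintro ⟨i, j⟩ hij
    rw [Finset.mem_product, Finset.mem_singleton] at hij
    obtain ⟨hi1, hi2, hi3⟩ := hK'mem i hij.1
    rw [hPsetdef, Finset.mem_filter, Finset.mem_product, Finset.mem_Icc, Finset.mem_Icc]
    rw [hij.2]
    exact ⟨⟨⟨hi1, hi2⟩, ⟨hs1, hs2⟩⟩, hKmem i hi1 hi2 hi3⟩
  set X := Pset \ (K' ×ˢ ({s} : Finset ℕ)) with hXdef
  have hPcard : Pset.card = q := by
    have : Pset.card = Rplus p q a := rfl
    omega
  have hXcard : X.card = q - (p - 1) := by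
    rw [hXdef, Finset.card_sdiff_of_subset hKs_sub, hPcard, Finset.card_product,
      Finset.card_singleton, mul_one, hK'card]
  have hXmem : ∀ i j, (i, j) ∈ X →
      1 ≤ i ∧ i ≤ p ∧ i ≠ p ∧ p + 1 ≤ j ∧ j ≤ p + q ∧ j ≠ s ∧ a j < a i := by
    intro i j hij
    rw [hXdef, Finset.mem_sdiff, hPsetdef, Finset.mem_filter, Finset.mem_product,
      Finset.mem_Icc, Finset.mem_Icc, Finset.mem_product, Finset.mem_singleton] at hij
    obtain ⟨⟨⟨⟨hi1, hi2⟩, hj1, hj2⟩, hlt⟩, hnot⟩ := hij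
    have hip : i ≠ p := by
      rintro rfl
      rcases eq_or_ne j s with rfl | hne
      · exact absurd hlt (not_lt.mpr (le_of_lt hs4))
      · exact absurd hlt (not_lt.mpr (le_of_lt (lt_trans hs4 (hSmem j hj1 hj2 hne))))
    have hjs : j ≠ s := by
      rintro rfl
      apply hnot
      constructor
      · rw [hK'def, Finset.mem_erase, Finset.mem_Icc]
        exact ⟨hip, hi1, hi2⟩
      · rfl
    exact ⟨hi1, hi2, hip, hj1, hj2, hjs, hlt⟩
  -- Step 5: pigeonhole - find an all-equal row and column
  have hrow : ∃ i₀ ∈ K', ∀ j, (i₀, j) ∉ X := by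
    by_contra h
    push_neg at h
    have hg : ∀ i, ∃ j, i ∈ K' → (i, j) ∈ X := by
      intro i
      by_cases hi : i ∈ K'
      · obtain ⟨j, hj⟩ := h i hi
        exact ⟨j, fun _ => hj⟩
      · exact ⟨0, fun hc => absurd hc hi⟩
    choose g hg using hg
    have hinj : K'.card ≤ X.card := by
      apply Finset.card_le_card_of_injOn (fun i => (i, g i))
      · intro i hi; exact hg i hi
      · intro i _ i' _ hii'
        exact (Prod.mk.injEq _ _ _ _).mp hii' |>.1
    omega
  have hcol : ∃ j₀ ∈ (Finset.Icc (p+1) (p+q)).erase s, ∀ i, (i, j₀) ∉ X := by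
    by_contra h
    push_neg at h
    have hg : ∀ j, ∃ i, j ∈ (Finset.Icc (p+1) (p+q)).erase s → (i, j) ∈ X := by
      intro j
      by_cases hj : j ∈ (Finset.Icc (p+1) (p+q)).erase s
      · obtain ⟨i, hi⟩ := h j hj
        exact ⟨i, fun _ => hi⟩
      · exact ⟨0, fun hc => absurd hc hj⟩
    choose g hg using hg
    have hecard : ((Finset.Icc (p+1) (p+q)).erase s).card = q - 1 := by
      rw [Finset.card_erase_of_mem, hcard2]
      rw [Finset.mem_Icc]; omega
    have hinj : ((Finset.Icc (p+1) (p+q)).erase s).card ≤ X.card := by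
      apply Finset.card_le_card_of_injOn (fun j => (g j, j))
      · intro j hj; exact hg j hj
      · intro j _ j' _ hjj'
        exact (Prod.mk.injEq _ _ _ _).mp hjj' |>.2
    omega
  obtain ⟨i₀, hi₀K, hi₀⟩ := hrow
  obtain ⟨j₀, hj₀K, hj₀⟩ := hcol
  obtain ⟨hi₀1, hi₀2, hi₀3⟩ := hK'mem i₀ hi₀K
  rw [Finset.mem_erase, Finset.mem_Icc] at hj₀K
  obtain ⟨hj₀s, hj₀1, hj₀2⟩ := hj₀K
  -- row i₀ is all-equal off s
  have hroweq : ∀ j, p + 1 ≤ j → j ≤ p + q → j ≠ s → a j = a i₀ := by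
    intro j h1 h2 hne
    refine le_antisymm (h3 i₀ hi₀1 hi₀2 hi₀3 j h1 h2) ?_
    by_contra hlt
    push_neg at hlt
    apply hi₀ j
    rw [hXdef, Finset.mem_sdiff]
    constructor
    · rw [hPsetdef, Finset.mem_filter, Finset.mem_product, Finset.mem_Icc, Finset.mem_Icc]
      exact ⟨⟨⟨hi₀1, hi₀2⟩, h1, h2⟩, hlt⟩
    · rw [Finset.mem_product, Finset.mem_singleton]
      rintro ⟨_, h⟩
      exact hne h
  -- column j₀ is all-equal off p
  have hcoleq : ∀ i, 1 ≤ i → i ≤ p → i ≠ p → a i = a j₀ := by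
    intro i h1 h2 hne
    refine le_antisymm ?_ (h3 i h1 h2 hne j₀ hj₀1 hj₀2)
    by_contra hlt
    push_neg at hlt
    apply hj₀ i
    rw [hXdef, Finset.mem_sdiff]
    constructor
    · rw [hPsetdef, Finset.mem_filter, Finset.mem_product, Finset.mem_Icc, Finset.mem_Icc]
      exact ⟨⟨⟨h1, h2⟩, hj₀1, hj₀2⟩, hlt⟩
    · rw [Finset.mem_product, Finset.mem_singleton]
      rintro ⟨_, h⟩
      exact hj₀s h
  -- X is empty
  have hXempty : X = ∅ := by
    rw [Finset.eq_empty_iff_forall_notMem]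
    rintro ⟨i, j⟩ hij
    obtain ⟨h1, h2, h3', h4, h5, h6, h7⟩ := hXmem i j hij
    have e1 : a i = a j₀ := hcoleq i h1 h2 h3'
    have e2 : a j₀ = a i₀ := hroweq j₀ hj₀1 hj₀2 hj₀s
    have e3 : a j = a i₀ := hroweq j h4 h5 h6
    rw [e1, e2, ← e3] at h7
    exact lt_irrefl _ h7
  rw [hXempty, Finset.card_empty] at hXcard
  omega
end

section
/- Assume 1 ≤ p ≤ q and R⁺(a) + R⁻(a) ≤ 2p. Then for every real number c, at least one of the three quantities #{i : 1 ≤ i ≤ p, a_i ≥ c}, #{i : 1 ≤ i ≤ p, a_i ≤ c}, #{i : 1 ≤ i ≤ p, a_i ≠ c} is at most 2. (This is the first dichotomy step in the proof of Theorem 1.2(2): at least one of x+y, y+z, x+z is ≤ 2.) -/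
/-!
As `a i < a j` and `a j < a i` are exclusive, `R⁺(a) + R⁻(a)` counts the pairs `(i, j)` with
`a i ≠ a j`. If all three counts were at least `3`, every column `j` would contribute at least `3`
such pairs: according as `a j < c`, `a j = c` or `a j > c`, each `i` with `c ≤ a i`, `a i ≠ c` or
`a i ≤ c` respectively differs from `a j`. Then `R⁺(a) + R⁻(a) ≥ 3q > 2p`.
-/

open Finset

section Counting

variable {ι α : Type*} [LinearOrder α]

theorem card_filter_lt_add_card_filter_gt [DecidableEq ι] (s : Finset ι) (f g : ι → α) :
    #{x ∈ s | f x < g x} + #{x ∈ s | g x < f x} = #{x ∈ s | f x ≠ g x} := by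
  rw [← card_union_of_disjoint (disjoint_filter.2 fun _ _ h h' => (h.asymm h').elim),
    ← filter_or]
  simp only [ne_iff_lt_or_gt]

theorem le_card_filter_ne_of_le_card_filters (s : Finset ι) (f : ι → α) {n : ℕ} {c : α}
    (hge : n ≤ #{i ∈ s | c ≤ f i}) (hle : n ≤ #{i ∈ s | f i ≤ c})
    (hne : n ≤ #{i ∈ s | f i ≠ c}) (b : α) :
    n ≤ #{i ∈ s | f i ≠ b} := by
  rcases lt_trichotomy b c with hbc | rfl | hcb
  · exact hge.trans <| card_le_card <| monotone_filter_right s fun _ _ h => (hbc.trans_le h).ne'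
  · exact hne
  · exact hle.trans <| card_le_card <| monotone_filter_right s fun _ _ h => (h.trans_lt hcb).ne

end Counting

theorem card_filter_product_eq_sum_card_filter {ι κ : Type*} (s : Finset ι) (t : Finset κ)
    (r : ι → κ → Prop) [DecidableRel r] :
    #{x ∈ s ×ˢ t | r x.1 x.2} = ∑ j ∈ t, #{i ∈ s | r i j} := by
  simp only [card_filter, sum_product_right]

theorem Rplus_add_Rminus (p q : ℕ) (a : ℕ → ℝ) :
    Rplus p q a + Rminus p q a = ∑ j ∈ Icc (p + 1) (p + q), #{i ∈ Icc 1 p | a i ≠ a j} := by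
  rw [Rplus, Rminus, add_comm, card_filter_lt_add_card_filter_gt,
    card_filter_product_eq_sum_card_filter (r := fun i j => a i ≠ a j)]

/-- first dichotomy step in the proof of Theorem 1.2(2). If
`1 ≤ p ≤ q` and `R⁺(a) + R⁻(a) ≤ 2p`, then for every real `c` at least one of
`#{i : 1 ≤ i ≤ p, a i ≥ c}`, `#{i : 1 ≤ i ≤ p, a i ≤ c}`,
`#{i : 1 ≤ i ≤ p, a i ≠ c}` is at most `2`. -/
theorem dichotomy_step (p q : ℕ) (a : ℕ → ℝ)
    (hp : 1 ≤ p) (hpq : p ≤ q)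
    (hR : Rplus p q a + Rminus p q a ≤ 2 * p) :
    ∀ c : ℝ,
      ((Finset.Icc 1 p).filter (fun i => c ≤ a i)).card ≤ 2 ∨
      ((Finset.Icc 1 p).filter (fun i => a i ≤ c)).card ≤ 2 ∨
      ((Finset.Icc 1 p).filter (fun i => a i ≠ c)).card ≤ 2 := by
  intro c
  by_contra! h
  obtain ⟨hge, hle, hne⟩ := h
  have hcolumn (j : ℕ) : 3 ≤ #{i ∈ Icc 1 p | a i ≠ a j} :=
    le_card_filter_ne_of_le_card_filters _ a hge hle hne (a j)
  have h3q : 3 * q ≤ Rplus p q a + Rminus p q a := by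
    rw [Rplus_add_Rminus]
    simpa [mul_comm] using card_nsmul_le_sum (Icc (p + 1) (p + q)) _ 3 fun j _ => hcolumn j
  omega
end

section
/- Assume p ≥ 5 and q = p+1. Suppose the sequence a is dominant, R⁺(a) = R⁻(a) ≤ p, and there exists an index s with 1 ≤ s ≤ p such that a_{p+1} > a_s > a_{p+q}. Then exactly one of the following three patterns holds: (P1) a_{p+1} > a_1 = a_2 = … = a_p = a_{p+2} = … = a_{p+q−1} > a_{p+q}; (P2) a_1 = … = a_{p−1} = a_{p+1} = … = a_{p+q−1} > a_p > a_{p+q}; (P3) a_{p+1} > a_1 > a_2 = … = a_p = a_{p+2} = … = a_{p+q}. Conversely, each of the patterns P1, P2, P3 implies that a is dominant, that R⁺(a) = R⁻(a) = p, and that condition D₂(a) fails. (This substantiates the paper's claim that when q = p+1 the set Q∖D has exactly 3 elements.) -/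
/-- Pattern P1: `a (p+1) > a 1 = a 2 = … = a p = a (p+2) = … = a (p+q-1) > a (p+q)`. -/
def PatP1 (p q : ℕ) (a : ℕ → ℝ) : Prop :=
  a 1 < a (p + 1) ∧
  (∀ i, 1 ≤ i → i ≤ p → a i = a 1) ∧
  (∀ j, p + 2 ≤ j → j ≤ p + q - 1 → a j = a 1) ∧
  a (p + q) < a 1

/-- Pattern P2: `a 1 = … = a (p-1) = a (p+1) = … = a (p+q-1) > a p > a (p+q)`. -/
def PatP2 (p q : ℕ) (a : ℕ → ℝ) : Prop :=
  (∀ i, 1 ≤ i → i ≤ p - 1 → a i = a 1) ∧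
  (∀ j, p + 1 ≤ j → j ≤ p + q - 1 → a j = a 1) ∧
  a p < a 1 ∧
  a (p + q) < a p

/-- Pattern P3: `a (p+1) > a 1 > a 2 = … = a p = a (p+2) = … = a (p+q)`. -/
def PatP3 (p q : ℕ) (a : ℕ → ℝ) : Prop :=
  a 1 < a (p + 1) ∧
  a 2 < a 1 ∧
  (∀ i, 2 ≤ i → i ≤ p → a i = a 2) ∧
  (∀ j, p + 2 ≤ j → j ≤ p + q → a j = a 2)

open Finset in
lemma Rplus_sum (p q : ℕ) (a : ℕ → ℝ) :
    Rplus p q a = ∑ i ∈ Finset.Icc 1 p,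
      ((Finset.Icc (p+1) (p+q)).filter (fun j => a j < a i)).card := by
  unfold Rplus
  rw [Finset.card_filter, Finset.sum_product]
  exact Finset.sum_congr rfl fun i _ => (Finset.card_filter _ _).symm

open Finset in
lemma Rminus_sum (p q : ℕ) (a : ℕ → ℝ) :
    Rminus p q a = ∑ i ∈ Finset.Icc 1 p,
      ((Finset.Icc (p+1) (p+q)).filter (fun j => a i < a j)).card := by
  unfold Rminus
  rw [Finset.card_filter, Finset.sum_product]
  exact Finset.sum_congr rfl fun i _ => (Finset.card_filter _ _).symm

open Finset in
lemma tri_card (t : Finset ℕ) (a : ℕ → ℝ) (x : ℝ) :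
    (t.filter (fun j => a j < x)).card + (t.filter (fun j => x < a j)).card
      + (t.filter (fun j => a j = x)).card = t.card := by
  rw [Finset.card_filter, Finset.card_filter, Finset.card_filter,
    ← Finset.sum_add_distrib, ← Finset.sum_add_distrib, Finset.card_eq_sum_ones]
  refine Finset.sum_congr rfl fun j _ => ?_
  rcases lt_trichotomy (a j) x with h | h | h
  · simp [h, not_lt_of_gt h, ne_of_lt h]
  · simp [h]
  · simp [not_lt_of_gt h, h, ne_of_gt h, lt_asymm h]
open Finset in
lemma conv1 (p : ℕ) (a : ℕ → ℝ) (hp : 5 ≤ p) (h : PatP1 p (p+1) a) :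
    Dominant p (p+1) a ∧ Rplus p (p+1) a = p ∧ Rminus p (p+1) a = p ∧ ¬ D2 p (p+1) a := by
  obtain ⟨h1, h2, h3, h4⟩ := h
  have hmid : ∀ j, p + 2 ≤ j → j ≤ 2*p → a j = a 1 := fun j hj1 hj2 =>
    h3 j hj1 (by omega)
  refine ⟨⟨fun i j hi hij hjp => ?_, fun i j hi hij hj => ?_⟩, ?_, ?_, ?_⟩
  · rw [h2 i hi (le_trans hij hjp), h2 j (le_trans hi hij) hjp]
  · rcases eq_or_lt_of_le hij with rfl | hlt
    · exact le_refl _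
    · by_cases hjtop : j = p + (p+1)
      · subst hjtop
        by_cases hib : i = p + 1
        · subst hib; exact le_of_lt (lt_trans h4 h1)
        · rw [hmid i (by omega) (by omega)]; exact le_of_lt h4
      · have haj : a j = a 1 := hmid j (by omega) (by omega)
        by_cases hib : i = p + 1
        · subst hib; rw [haj]; exact le_of_lt h1
        · rw [haj, hmid i (by omega) (by omega)]
  · rw [Rplus_sum]
    have key : ∀ i ∈ Finset.Icc 1 p,
        ((Finset.Icc (p+1) (p+(p+1))).filter (fun j => a j < a i)).card = 1 := by
      intro i hi
      rw [Finset.mem_Icc] at hi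
      have hai : a i = a 1 := h2 i hi.1 hi.2
      have : ((Finset.Icc (p+1) (p+(p+1))).filter (fun j => a j < a i)) = {p+(p+1)} := by
        apply Finset.eq_singleton_iff_unique_mem.mpr
        constructor
        · rw [Finset.mem_filter, Finset.mem_Icc, hai]; exact ⟨⟨by omega, le_refl _⟩, h4⟩
        · intro b hb
          rw [Finset.mem_filter, Finset.mem_Icc, hai] at hb
          obtain ⟨⟨hb1, hb2⟩, hb3⟩ := hb
          by_contra hbne
          rcases eq_or_lt_of_le hb1 with rfl | hbgt
          · exact absurd (lt_trans h1 hb3) (lt_irrefl _)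
          · rw [hmid b (by omega) (by omega)] at hb3; exact lt_irrefl _ hb3
      rw [this, Finset.card_singleton]
    rw [Finset.sum_congr rfl key, Finset.sum_const, Nat.card_Icc, smul_eq_mul]
    omega
  · rw [Rminus_sum]
    have key : ∀ i ∈ Finset.Icc 1 p,
        ((Finset.Icc (p+1) (p+(p+1))).filter (fun j => a i < a j)).card = 1 := by
      intro i hi
      rw [Finset.mem_Icc] at hi
      have hai : a i = a 1 := h2 i hi.1 hi.2
      have : ((Finset.Icc (p+1) (p+(p+1))).filter (fun j => a i < a j)) = {p+1} := by
        apply Finset.eq_singleton_iff_unique_mem.mpr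
        constructor
        · rw [Finset.mem_filter, Finset.mem_Icc, hai]; exact ⟨⟨le_refl _, by omega⟩, h1⟩
        · intro b hb
          rw [Finset.mem_filter, Finset.mem_Icc, hai] at hb
          obtain ⟨⟨hb1, hb2⟩, hb3⟩ := hb
          by_contra hbne
          by_cases hbt : b = p + (p+1)
          · subst hbt; exact absurd (lt_trans h4 hb3) (lt_irrefl _)
          · rw [hmid b (by omega) (by omega)] at hb3; exact lt_irrefl _ hb3
      rw [this, Finset.card_singleton]
    rw [Finset.sum_congr rfl key, Finset.sum_const, Nat.card_Icc, smul_eq_mul]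
    omega
  · rintro (hd | ⟨l, hl1, hl2, hla, hlb⟩ | hd)
    · linarith
    · have : a l = a 1 := h2 l hl1 (by omega)
      linarith
    · have : a p = a 1 := h2 p (by omega) (le_refl _)
      linarith
open Finset in
lemma conv2 (p : ℕ) (a : ℕ → ℝ) (hp : 5 ≤ p) (h : PatP2 p (p+1) a) :
    Dominant p (p+1) a ∧ Rplus p (p+1) a = p ∧ Rminus p (p+1) a = p ∧ ¬ D2 p (p+1) a := by
  obtain ⟨h1, h2, h3, h4⟩ := h
  have hrt : ∀ j, p + 1 ≤ j → j ≤ 2*p → a j = a 1 := fun j hj1 hj2 => h2 j hj1 (by omega)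
  have hlf : ∀ i, 1 ≤ i → i ≤ p → a (p+(p+1)) < a i ∧ a i ≤ a 1 := by
    intro i hi1 hi2
    by_cases hip : i = p
    · subst hip; exact ⟨h4, le_of_lt h3⟩
    · rw [h1 i hi1 (by omega)]; exact ⟨by linarith, le_refl _⟩
  refine ⟨⟨fun i j hi hij hjp => ?_, fun i j hi hij hj => ?_⟩, ?_, ?_, ?_⟩
  · by_cases hjp' : j = p
    · rw [hjp']
      by_cases hip : i = p
      · rw [hip]
      · rw [h1 i hi (by omega)]; exact le_of_lt h3
    · rw [h1 j (le_trans hi hij) (by omega)]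
      by_cases hip : i = p
      · omega
      · rw [h1 i hi (by omega)]
  · by_cases hjtop : j = p + (p+1)
    · subst hjtop
      by_cases hij' : i = p + (p+1)
      · subst hij'; exact le_refl _
      · rw [hrt i hi (by omega)]; linarith
    · rw [hrt j (le_trans hi hij) (by omega), hrt i hi (by omega)]
  · rw [Rplus_sum]
    have key : ∀ i ∈ Finset.Icc 1 p,
        ((Finset.Icc (p+1) (p+(p+1))).filter (fun j => a j < a i)).card = 1 := by
      intro i hi
      rw [Finset.mem_Icc] at hi
      obtain ⟨hlow, hup⟩ := hlf i hi.1 hi.2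
      have : ((Finset.Icc (p+1) (p+(p+1))).filter (fun j => a j < a i)) = {p+(p+1)} := by
        apply Finset.eq_singleton_iff_unique_mem.mpr
        refine ⟨by rw [Finset.mem_filter, Finset.mem_Icc]; exact ⟨⟨by omega, le_refl _⟩, hlow⟩, ?_⟩
        intro b hb
        rw [Finset.mem_filter, Finset.mem_Icc] at hb
        obtain ⟨⟨hb1, hb2⟩, hb3⟩ := hb
        by_contra hbne
        rw [hrt b hb1 (by omega)] at hb3
        linarith
      rw [this, Finset.card_singleton]
    rw [Finset.sum_congr rfl key, Finset.sum_const, Nat.card_Icc, smul_eq_mul]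
    omega
  · rw [Rminus_sum]
    rw [Finset.sum_eq_single_of_mem p (by rw [Finset.mem_Icc]; omega)]
    · have : ((Finset.Icc (p+1) (p+(p+1))).filter (fun j => a p < a j))
          = Finset.Icc (p+1) (2*p) := by
        ext b
        rw [Finset.mem_filter, Finset.mem_Icc, Finset.mem_Icc]
        constructor
        · rintro ⟨⟨hb1, hb2⟩, hb3⟩
          refine ⟨hb1, ?_⟩
          by_contra hbt
          have : b = p + (p+1) := by omega
          subst this; linarith
        · rintro ⟨hb1, hb2⟩
          refine ⟨⟨hb1, by omega⟩, ?_⟩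
          rw [hrt b hb1 hb2]; exact h3
      rw [this, Nat.card_Icc]; omega
    · intro i hi hine
      rw [Finset.mem_Icc] at hi
      rw [Finset.card_eq_zero, Finset.filter_eq_empty_iff]
      intro b hb
      rw [Finset.mem_Icc] at hb
      rw [h1 i hi.1 (by omega)]
      by_cases hbt : b = p + (p+1)
      · subst hbt; push_neg; linarith
      · rw [hrt b hb.1 (by omega)]; push_neg; exact le_refl _
  · rintro (hd | ⟨l, hl1, hl2, hla, hlb⟩ | hd)
    · linarith
    · by_cases hlp : l + 1 = p
      · rw [hlp] at hlb; linarith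
      · rw [h1 (l+1) (by omega) (by omega)] at hlb; linarith
    · rw [hrt (p+1) (le_refl _) (by omega)] at hd; linarith
open Finset in
lemma conv3 (p : ℕ) (a : ℕ → ℝ) (hp : 5 ≤ p) (h : PatP3 p (p+1) a) :
    Dominant p (p+1) a ∧ Rplus p (p+1) a = p ∧ Rminus p (p+1) a = p ∧ ¬ D2 p (p+1) a := by
  obtain ⟨h1, h2, h3, h4⟩ := h
  have hup : ∀ i, 1 ≤ i → i ≤ p → a 2 ≤ a i ∧ a i ≤ a 1 := by
    intro i hi1 hi2
    by_cases hi : i = 1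
    · rw [hi]; exact ⟨le_of_lt h2, le_refl _⟩
    · rw [h3 i (by omega) hi2]; exact ⟨le_refl _, le_of_lt h2⟩
  refine ⟨⟨fun i j hi hij hjp => ?_, fun i j hi hij hj => ?_⟩, ?_, ?_, ?_⟩
  · by_cases hi : i = 1
    · rw [hi]; exact (hup j (by omega) hjp).2
    · rw [h3 i (by omega) (le_trans hij hjp), h3 j (by omega) hjp]
  · by_cases hi : i = p + 1
    · by_cases hj' : j = p + 1
      · rw [hi, hj']
      · rw [hi, h4 j (by omega) hj]
        linarith [(hup 1 (le_refl _) (by omega)).2]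
    · rw [h4 j (by omega) hj, h4 i (by omega) (by omega)]
  · rw [Rplus_sum]
    rw [Finset.sum_eq_single_of_mem 1 (by rw [Finset.mem_Icc]; omega)]
    · have : ((Finset.Icc (p+1) (p+(p+1))).filter (fun j => a j < a 1))
          = Finset.Icc (p+2) (p+(p+1)) := by
        ext b
        rw [Finset.mem_filter, Finset.mem_Icc, Finset.mem_Icc]
        constructor
        · rintro ⟨⟨hb1, hb2⟩, hb3⟩
          refine ⟨?_, hb2⟩
          by_contra hbt
          have : b = p + 1 := by omega
          rw [this] at hb3; linarith
        · rintro ⟨hb1, hb2⟩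
          refine ⟨⟨by omega, hb2⟩, ?_⟩
          rw [h4 b hb1 hb2]; exact h2
      rw [this, Nat.card_Icc]; omega
    · intro i hi hine
      rw [Finset.mem_Icc] at hi
      rw [Finset.card_eq_zero, Finset.filter_eq_empty_iff]
      intro b hb
      rw [Finset.mem_Icc] at hb
      rw [h3 i (by omega) hi.2]
      push_neg
      by_cases hbt : b = p + 1
      · rw [hbt]; linarith
      · rw [h4 b (by omega) hb.2]
  · rw [Rminus_sum]
    have key : ∀ i ∈ Finset.Icc 1 p,
        ((Finset.Icc (p+1) (p+(p+1))).filter (fun j => a i < a j)).card = 1 := by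
      intro i hi
      rw [Finset.mem_Icc] at hi
      obtain ⟨hlow, hupi⟩ := hup i hi.1 hi.2
      have : ((Finset.Icc (p+1) (p+(p+1))).filter (fun j => a i < a j)) = {p+1} := by
        apply Finset.eq_singleton_iff_unique_mem.mpr
        refine ⟨by rw [Finset.mem_filter, Finset.mem_Icc]
                   exact ⟨⟨le_refl _, by omega⟩, by linarith⟩, ?_⟩
        intro b hb
        rw [Finset.mem_filter, Finset.mem_Icc] at hb
        obtain ⟨⟨hb1, hb2⟩, hb3⟩ := hb
        by_contra hbne
        rw [h4 b (by omega) hb2] at hb3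
        linarith
      rw [this, Finset.card_singleton]
    rw [Finset.sum_congr rfl key, Finset.sum_const, Nat.card_Icc, smul_eq_mul]
    omega
  · rintro (hd | ⟨l, hl1, hl2, hla, hlb⟩ | hd)
    · rw [h4 (p+(p+1)) (by omega) (le_refl _)] at hd; linarith
    · have : a l ≤ a 1 := (hup l hl1 (by omega)).2
      linarith
    · rw [h3 p (by omega) (le_refl _)] at hd; linarith
set_option maxHeartbeats 2000000 in
open Finset in
lemma fwd (p : ℕ) (a : ℕ → ℝ) (hp : 5 ≤ p)
    (hdom : Dominant p (p+1) a)
    (hReq : Rplus p (p+1) a = Rminus p (p+1) a)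
    (hRle : Rminus p (p+1) a ≤ p)
    (s : ℕ) (hs1 : 1 ≤ s) (hsp : s ≤ p)
    (hslt : a s < a (p + 1)) (hsgt : a (p + (p+1)) < a s) :
    PatP1 p (p+1) a ∨ PatP2 p (p+1) a ∨ PatP3 p (p+1) a := by
  obtain ⟨hL, hR⟩ := hdom
  have hTcard : (Finset.Icc (p+1) (p+(p+1))).card = p + 1 := by rw [Nat.card_Icc]; omega
  have hIccCard : (Finset.Icc 1 p).card = p := by rw [Nat.card_Icc]; omega
  have htri : ∀ x : ℝ,
      ((Finset.Icc (p+1) (p+(p+1))).filter (fun j => a j < x)).card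
      + ((Finset.Icc (p+1) (p+(p+1))).filter (fun j => x < a j)).card
      + ((Finset.Icc (p+1) (p+(p+1))).filter (fun j => a j = x)).card = p + 1 := by
    intro x; rw [tri_card, hTcard]
  have hkey : p * (p + 1) ≤
      (∑ i ∈ Finset.Icc 1 p,
        ((Finset.Icc (p+1) (p+(p+1))).filter (fun j => a j = a i)).card) + 2 * p := by
    have h0 : (∑ i ∈ Finset.Icc 1 p,
          ((Finset.Icc (p+1) (p+(p+1))).filter (fun j => a j < a i)).card)
        + (∑ i ∈ Finset.Icc 1 p,
          ((Finset.Icc (p+1) (p+(p+1))).filter (fun j => a i < a j)).card)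
        + (∑ i ∈ Finset.Icc 1 p,
          ((Finset.Icc (p+1) (p+(p+1))).filter (fun j => a j = a i)).card)
        = p * (p + 1) := by
      rw [← Finset.sum_add_distrib, ← Finset.sum_add_distrib,
        Finset.sum_congr rfl (fun i _ => htri (a i)), Finset.sum_const, hIccCard,
        smul_eq_mul]
    have e1 := Rplus_sum p (p+1) a
    have e2 := Rminus_sum p (p+1) a
    rw [← e1, ← e2] at h0
    rw [hReq] at e1
    linarith
  -- Step 2 : the middle of the left side is constant
  have hmid : ∀ i, 2 ≤ i → i ≤ p - 1 → a i = a 2 := by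
    have hpm : a (p-1) = a 2 := by
      by_contra hne
      have hlt2 : a (p-1) < a 2 :=
        lt_of_le_of_ne (hL 2 (p-1) (by omega) (by omega) (by omega)) hne
      have hIcard : ((Finset.Icc 1 p).filter (fun i => a 2 ≤ a i)).card
          + ((Finset.Icc 1 p).filter (fun i => ¬ a 2 ≤ a i)).card = p := by
        rw [Finset.card_filter_add_card_filter_not, hIccCard]
      have hI1 : 2 ≤ ((Finset.Icc 1 p).filter (fun i => a 2 ≤ a i)).card := by
        have hsub : ({1, 2} : Finset ℕ) ⊆ (Finset.Icc 1 p).filter (fun i => a 2 ≤ a i) := by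
          intro x hx
          simp only [Finset.mem_insert, Finset.mem_singleton] at hx
          rcases hx with rfl | rfl <;> rw [Finset.mem_filter, Finset.mem_Icc]
          · exact ⟨⟨le_refl _, by omega⟩, hL 1 2 (by omega) (by omega) (by omega)⟩
          · exact ⟨⟨by omega, by omega⟩, le_refl _⟩
        have h2 : ({1, 2} : Finset ℕ).card = 2 := by decide
        exact le_trans (le_of_eq h2.symm) (Finset.card_le_card hsub)
      have hI2 : 2 ≤ ((Finset.Icc 1 p).filter (fun i => ¬ a 2 ≤ a i)).card := by
        have hsub : ({p-1, p} : Finset ℕ) ⊆ (Finset.Icc 1 p).filter (fun i => ¬ a 2 ≤ a i) := by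
          intro x hx
          rw [Finset.mem_filter, Finset.mem_Icc]
          simp only [Finset.mem_insert, Finset.mem_singleton] at hx
          rcases hx with h | h <;> rw [h]
          · exact ⟨⟨by omega, by omega⟩, not_le.mpr hlt2⟩
          · refine ⟨⟨by omega, le_refl _⟩, not_le.mpr ?_⟩
            exact lt_of_le_of_lt (hL (p-1) p (by omega) (by omega) (by omega)) hlt2
        have h2 : ({p-1, p} : Finset ℕ).card = 2 := Finset.card_pair (by omega)
        exact le_trans (le_of_eq h2.symm) (Finset.card_le_card hsub)
      have hJ : ((Finset.Icc (p+1) (p+(p+1))).filter (fun j => a 2 ≤ a j)).card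
          + ((Finset.Icc (p+1) (p+(p+1))).filter (fun j => ¬ a 2 ≤ a j)).card = p + 1 := by
        rw [Finset.card_filter_add_card_filter_not, hTcard]
      have hb1 : ∑ i ∈ (Finset.Icc 1 p).filter (fun i => a 2 ≤ a i),
          ((Finset.Icc (p+1) (p+(p+1))).filter (fun j => a j = a i)).card
          ≤ ((Finset.Icc 1 p).filter (fun i => a 2 ≤ a i)).card
            * ((Finset.Icc (p+1) (p+(p+1))).filter (fun j => a 2 ≤ a j)).card := by
        rw [← smul_eq_mul]
        apply Finset.sum_le_card_nsmul
        intro i hi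
        rw [Finset.mem_filter] at hi
        apply Finset.card_le_card
        intro j hj
        rw [Finset.mem_filter] at hj ⊢
        exact ⟨hj.1, hj.2 ▸ hi.2⟩
      have hb2 : ∑ i ∈ (Finset.Icc 1 p).filter (fun i => ¬ a 2 ≤ a i),
          ((Finset.Icc (p+1) (p+(p+1))).filter (fun j => a j = a i)).card
          ≤ ((Finset.Icc 1 p).filter (fun i => ¬ a 2 ≤ a i)).card
            * ((Finset.Icc (p+1) (p+(p+1))).filter (fun j => ¬ a 2 ≤ a j)).card := by
        rw [← smul_eq_mul]
        apply Finset.sum_le_card_nsmul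
        intro i hi
        rw [Finset.mem_filter] at hi
        apply Finset.card_le_card
        intro j hj
        rw [Finset.mem_filter] at hj ⊢
        exact ⟨hj.1, hj.2 ▸ hi.2⟩
      have hsplit : ∑ i ∈ Finset.Icc 1 p,
            ((Finset.Icc (p+1) (p+(p+1))).filter (fun j => a j = a i)).card
          = (∑ i ∈ (Finset.Icc 1 p).filter (fun i => a 2 ≤ a i),
              ((Finset.Icc (p+1) (p+(p+1))).filter (fun j => a j = a i)).card)
            + ∑ i ∈ (Finset.Icc 1 p).filter (fun i => ¬ a 2 ≤ a i),
              ((Finset.Icc (p+1) (p+(p+1))).filter (fun j => a j = a i)).card :=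
        (Finset.sum_filter_add_sum_filter_not _ _ _).symm
      have m1 : ((Finset.Icc 1 p).filter (fun i => a 2 ≤ a i)).card
            * ((Finset.Icc (p+1) (p+(p+1))).filter (fun j => a 2 ≤ a j)).card
          ≤ (p-2) * ((Finset.Icc (p+1) (p+(p+1))).filter (fun j => a 2 ≤ a j)).card :=
        Nat.mul_le_mul_right _ (by omega)
      have m2 : ((Finset.Icc 1 p).filter (fun i => ¬ a 2 ≤ a i)).card
            * ((Finset.Icc (p+1) (p+(p+1))).filter (fun j => ¬ a 2 ≤ a j)).card
          ≤ (p-2) * ((Finset.Icc (p+1) (p+(p+1))).filter (fun j => ¬ a 2 ≤ a j)).card :=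
        Nat.mul_le_mul_right _ (by omega)
      have hexp : (p-2) * ((Finset.Icc (p+1) (p+(p+1))).filter (fun j => a 2 ≤ a j)).card
          + (p-2) * ((Finset.Icc (p+1) (p+(p+1))).filter (fun j => ¬ a 2 ≤ a j)).card
          = (p-2) * (p+1) := by rw [← Nat.mul_add, hJ]
      have hPP : (p-2)*(p+1) + 2*(p+1) = p*(p+1) := by
        have h2 : p - 2 + 2 = p := by omega
        calc (p-2)*(p+1) + 2*(p+1) = ((p-2)+2)*(p+1) := by ring
        _ = p*(p+1) := by rw [h2]
      linarith
    intro i hi1 hi2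
    refine le_antisymm (hL 2 i (by omega) hi1 (by omega)) ?_
    rw [← hpm]
    exact hL i (p-1) (by omega) hi2 (by omega)
  have hc12 : a 2 ≤ a 1 := hL 1 2 (by omega) (by omega) (by omega)
  have hcp : a p ≤ a 2 := by
    rw [← hmid (p-1) (by omega) (by omega)]
    exact hL (p-1) p (by omega) (by omega) (by omega)
  rcases eq_or_lt_of_le hc12 with h1e | h1l <;> rcases eq_or_lt_of_le hcp with hpe | hpl
  · -- Case A : all of the left side equals a 2 ; pattern P1
    left
    have hall : ∀ i, 1 ≤ i → i ≤ p → a i = a 2 := by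
      intro i hi1 hi2
      by_cases hi : i = 1
      · rw [hi]; exact h1e.symm
      · by_cases hip : i = p
        · rw [hip]; exact hpe
        · exact hmid i (by omega) (by omega)
    have hs2 : a 2 < a (p+1) := by rw [← hall s hs1 hsp]; exact hslt
    have hsg : a (p+(p+1)) < a 2 := by rw [← hall s hs1 hsp]; exact hsgt
    have hsumEq : ∑ i ∈ Finset.Icc 1 p,
        ((Finset.Icc (p+1) (p+(p+1))).filter (fun j => a j = a i)).card
        = p * ((Finset.Icc (p+1) (p+(p+1))).filter (fun j => a j = a 2)).card := by
      rw [Finset.sum_congr rfl (fun i hi => ?_), Finset.sum_const, hIccCard, smul_eq_mul]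
      rw [Finset.mem_Icc] at hi
      congr 1
      apply Finset.filter_congr
      intro j _
      rw [hall i hi.1 hi.2]
    have hJm : p - 1 ≤ ((Finset.Icc (p+1) (p+(p+1))).filter (fun j => a j = a 2)).card := by
      rw [hsumEq] at hkey
      have h2 : p * (((Finset.Icc (p+1) (p+(p+1))).filter (fun j => a j = a 2)).card + 2)
          = p * ((Finset.Icc (p+1) (p+(p+1))).filter (fun j => a j = a 2)).card + 2 * p := by
        ring
      have h3 : p * (p+1) ≤ p * (((Finset.Icc (p+1) (p+(p+1))).filter (fun j => a j = a 2)).card + 2) := by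
        rw [h2]; exact hkey
      have := Nat.le_of_mul_le_mul_left h3 (by omega : 0 < p)
      omega
    have htr2 := htri (a 2)
    have hgt1 : 1 ≤ ((Finset.Icc (p+1) (p+(p+1))).filter (fun j => a 2 < a j)).card := by
      apply Finset.card_pos.mpr
      exact ⟨p+1, Finset.mem_filter.mpr ⟨Finset.mem_Icc.mpr ⟨le_refl _, by omega⟩, hs2⟩⟩
    have hlt1 : 1 ≤ ((Finset.Icc (p+1) (p+(p+1))).filter (fun j => a j < a 2)).card := by
      apply Finset.card_pos.mpr
      exact ⟨p+(p+1), Finset.mem_filter.mpr ⟨Finset.mem_Icc.mpr ⟨by omega, le_refl _⟩, hsg⟩⟩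
    have hgtu := Finset.card_le_one.mp
      (by omega : ((Finset.Icc (p+1) (p+(p+1))).filter (fun j => a 2 < a j)).card ≤ 1)
    have hltu := Finset.card_le_one.mp
      (by omega : ((Finset.Icc (p+1) (p+(p+1))).filter (fun j => a j < a 2)).card ≤ 1)
    refine ⟨by rw [← h1e]; exact hs2, fun i hi1 hi2 => by rw [hall i hi1 hi2, h1e],
      fun j hj1 hj2 => ?_, by rw [← h1e]; exact hsg⟩
    rw [← h1e]
    refine le_antisymm ?_ ?_
    · by_contra hcon
      push_neg at hcon
      have := hgtu j (Finset.mem_filter.mpr ⟨Finset.mem_Icc.mpr ⟨by omega, by omega⟩, hcon⟩)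
        (p+1) (Finset.mem_filter.mpr ⟨Finset.mem_Icc.mpr ⟨le_refl _, by omega⟩, hs2⟩)
      omega
    · by_contra hcon
      push_neg at hcon
      have := hltu j (Finset.mem_filter.mpr ⟨Finset.mem_Icc.mpr ⟨by omega, by omega⟩, hcon⟩)
        (p+(p+1)) (Finset.mem_filter.mpr ⟨Finset.mem_Icc.mpr ⟨by omega, le_refl _⟩, hsg⟩)
      omega
  · -- Case C : a 1 = a 2 > a p ; pattern P2
    right; left
    have hall1 : ∀ i, 1 ≤ i → i ≤ p - 1 → a i = a 2 := by
      intro i hi1 hi2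
      by_cases hi : i = 1
      · rw [hi]; exact h1e.symm
      · exact hmid i (by omega) hi2
    have hsA : a s ≤ a 2 := by rw [h1e]; exact hL 1 s (le_refl 1) hs1 hsp
    have hsg : a (p+(p+1)) < a 2 := lt_of_lt_of_le hsgt hsA
    have hsplitC : Finset.Icc 1 p = insert p (Finset.Icc 1 (p-1)) := by
      ext x
      simp only [Finset.mem_Icc, Finset.mem_insert]
      omega
    have hpn : p ∉ Finset.Icc 1 (p-1) := by simp only [Finset.mem_Icc]; omega
    have hcongr : ∀ i ∈ Finset.Icc 1 (p-1),
        ((Finset.Icc (p+1) (p+(p+1))).filter (fun j => a j = a i)).card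
        = ((Finset.Icc (p+1) (p+(p+1))).filter (fun j => a j = a 2)).card := by
      intro i hi
      rw [Finset.mem_Icc] at hi
      congr 1
      apply Finset.filter_congr
      intro j _
      rw [hall1 i hi.1 hi.2]
    have hpm2 : p - 1 + 1 - 1 = p - 1 := by omega
    have hsum : ∑ i ∈ Finset.Icc 1 p,
          ((Finset.Icc (p+1) (p+(p+1))).filter (fun j => a j = a i)).card
        = ((Finset.Icc (p+1) (p+(p+1))).filter (fun j => a j = a p)).card
          + (p-1) * ((Finset.Icc (p+1) (p+(p+1))).filter (fun j => a j = a 2)).card := by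
      rw [hsplitC, Finset.sum_insert hpn,
        Finset.sum_congr rfl hcongr, Finset.sum_const, Nat.card_Icc, smul_eq_mul, hpm2]
    have hep : ((Finset.Icc (p+1) (p+(p+1))).filter (fun j => a j = a p)).card
        ≤ ((Finset.Icc (p+1) (p+(p+1))).filter (fun j => a j < a 2)).card := by
      apply Finset.card_le_card
      intro j hj
      rw [Finset.mem_filter] at hj ⊢
      exact ⟨hj.1, by rw [hj.2]; exact hpl⟩
    have htr2 := htri (a 2)
    have hJmp : p ≤ ((Finset.Icc (p+1) (p+(p+1))).filter (fun j => a j = a 2)).card := by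
      by_contra hcon
      push_neg at hcon
      rw [hsum] at hkey
      zify [show 1 ≤ p from by omega] at hkey
      have hep' := hep
      have htr2' := htr2
      zify at hep' htr2' hcon
      have hp' : (5:ℤ) ≤ (p:ℤ) := by exact_mod_cast hp
      nlinarith [hkey, hep', htr2', hcon, hp',
        mul_nonneg (show (0:ℤ) ≤ (p:ℤ) - 2 by linarith)
          (show (0:ℤ) ≤ (p:ℤ) - 1
              - (((Finset.Icc (p+1) (p+(p+1))).filter (fun j => a j = a 2)).card : ℤ)
            by linarith)]
    have hlt1 : 1 ≤ ((Finset.Icc (p+1) (p+(p+1))).filter (fun j => a j < a 2)).card := by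
      apply Finset.card_pos.mpr
      exact ⟨p+(p+1), Finset.mem_filter.mpr ⟨Finset.mem_Icc.mpr ⟨by omega, le_refl _⟩, hsg⟩⟩
    have hJgt0 : ((Finset.Icc (p+1) (p+(p+1))).filter (fun j => a 2 < a j)).card = 0 := by omega
    have hJlt1 : ((Finset.Icc (p+1) (p+(p+1))).filter (fun j => a j < a 2)).card = 1 := by omega
    have hge : ∀ j, p+1 ≤ j → j ≤ p+(p+1) → a j ≤ a 2 := by
      intro j hj1 hj2
      by_contra hcon
      push_neg at hcon
      have hmem : j ∈ (Finset.Icc (p+1) (p+(p+1))).filter (fun j => a 2 < a j) :=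
        Finset.mem_filter.mpr ⟨Finset.mem_Icc.mpr ⟨hj1, hj2⟩, hcon⟩
      rw [Finset.card_eq_zero.mp hJgt0] at hmem
      exact absurd hmem (Finset.notMem_empty j)
    have hltu := Finset.card_le_one.mp (le_of_eq hJlt1)
    have hmidR : ∀ j, p+1 ≤ j → j ≤ p+(p+1)-1 → a j = a 2 := by
      intro j hj1 hj2
      refine le_antisymm (hge j hj1 (by omega)) ?_
      by_contra hcon
      push_neg at hcon
      have := hltu j (Finset.mem_filter.mpr ⟨Finset.mem_Icc.mpr ⟨hj1, by omega⟩, hcon⟩)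
        (p+(p+1)) (Finset.mem_filter.mpr ⟨Finset.mem_Icc.mpr ⟨by omega, le_refl _⟩, hsg⟩)
      omega
    have hlast : a (p+(p+1)) < a p := by
      by_contra hcon
      push_neg at hcon
      have hRp : Rplus p (p+1) a = p - 1 := by
        rw [Rplus_sum, hsplitC, Finset.sum_insert hpn]
        have hbp : ((Finset.Icc (p+1) (p+(p+1))).filter (fun j => a j < a p)).card = 0 := by
          rw [Finset.card_eq_zero, Finset.filter_eq_empty_iff]
          intro b hb
          rw [Finset.mem_Icc] at hb
          push_neg
          by_cases hbt : b = p+(p+1)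
          · rw [hbt]; exact hcon
          · rw [hmidR b hb.1 (by omega)]; exact le_of_lt hpl
        have hbi : ∀ i ∈ Finset.Icc 1 (p-1),
            ((Finset.Icc (p+1) (p+(p+1))).filter (fun j => a j < a i)).card = 1 := by
          intro i hi
          rw [Finset.mem_Icc] at hi
          have : ((Finset.Icc (p+1) (p+(p+1))).filter (fun j => a j < a i)) = {p+(p+1)} := by
            apply Finset.eq_singleton_iff_unique_mem.mpr
            constructor
            · refine Finset.mem_filter.mpr ⟨Finset.mem_Icc.mpr ⟨by omega, le_refl _⟩, ?_⟩
              rw [hall1 i hi.1 hi.2]; exact hsg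
            · intro b hb
              rw [Finset.mem_filter, Finset.mem_Icc] at hb
              obtain ⟨⟨hb1, hb2⟩, hb3⟩ := hb
              by_contra hbne
              rw [hmidR b hb1 (by omega), hall1 i hi.1 hi.2] at hb3
              exact lt_irrefl _ hb3
          rw [this, Finset.card_singleton]
        rw [hbp, Finset.sum_congr rfl hbi, Finset.sum_const, Nat.card_Icc, smul_eq_mul]
        omega
      have hmemp : p ∈ Finset.Icc 1 p := Finset.mem_Icc.mpr ⟨by omega, le_refl p⟩
      have hRm : p ≤ Rminus p (p+1) a := by
        rw [Rminus_sum]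
        have step1 : p ≤ ((Finset.Icc (p+1) (p+(p+1))).filter (fun j => a p < a j)).card := by
          have hsub : Finset.Icc (p+1) (p+p)
              ⊆ (Finset.Icc (p+1) (p+(p+1))).filter (fun j => a p < a j) := by
            intro b hb
            rw [Finset.mem_Icc] at hb
            refine Finset.mem_filter.mpr ⟨Finset.mem_Icc.mpr ⟨hb.1, by omega⟩, ?_⟩
            rw [hmidR b hb.1 (by omega)]; exact hpl
          have := Finset.card_le_card hsub
          rw [Nat.card_Icc] at this
          omega
        calc p ≤ ((Finset.Icc (p+1) (p+(p+1))).filter (fun j => a p < a j)).card := step1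
        _ ≤ ∑ i ∈ Finset.Icc 1 p,
              ((Finset.Icc (p+1) (p+(p+1))).filter (fun j => a i < a j)).card :=
          Finset.single_le_sum
            (f := fun i => ((Finset.Icc (p+1) (p+(p+1))).filter (fun j => a i < a j)).card)
            (fun i _ => Nat.zero_le _) hmemp
      omega
    exact ⟨fun i hi1 hi2 => by rw [hall1 i hi1 hi2, h1e],
      fun j hj1 hj2 => by rw [hmidR j hj1 hj2, h1e],
      by rw [← h1e]; exact hpl, hlast⟩
  · -- Case B : a 1 > a 2 = a p ; pattern P3
    right; right
    have hall2 : ∀ i, 2 ≤ i → i ≤ p → a i = a 2 := by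
      intro i hi1 hi2
      by_cases hip : i = p
      · rw [hip]; exact hpe
      · exact hmid i hi1 (by omega)
    have hsA : a 2 ≤ a s := by rw [← hpe]; exact hL s p hs1 hsp (le_refl p)
    have hgtp1 : a 2 < a (p+1) := lt_of_le_of_lt hsA hslt
    have hsplitB : Finset.Icc 1 p = insert 1 (Finset.Icc 2 p) := by
      ext x
      simp only [Finset.mem_Icc, Finset.mem_insert]
      omega
    have h1n : (1:ℕ) ∉ Finset.Icc 2 p := by simp only [Finset.mem_Icc]; omega
    have hcongr : ∀ i ∈ Finset.Icc 2 p,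
        ((Finset.Icc (p+1) (p+(p+1))).filter (fun j => a j = a i)).card
        = ((Finset.Icc (p+1) (p+(p+1))).filter (fun j => a j = a 2)).card := by
      intro i hi
      rw [Finset.mem_Icc] at hi
      congr 1
      apply Finset.filter_congr
      intro j _
      rw [hall2 i hi.1 hi.2]
    have hpm2 : p + 1 - 2 = p - 1 := by omega
    have hsum : ∑ i ∈ Finset.Icc 1 p,
          ((Finset.Icc (p+1) (p+(p+1))).filter (fun j => a j = a i)).card
        = ((Finset.Icc (p+1) (p+(p+1))).filter (fun j => a j = a 1)).card
          + (p-1) * ((Finset.Icc (p+1) (p+(p+1))).filter (fun j => a j = a 2)).card := by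
      rw [hsplitB, Finset.sum_insert h1n,
        Finset.sum_congr rfl hcongr, Finset.sum_const, Nat.card_Icc, smul_eq_mul, hpm2]
    have he1 : ((Finset.Icc (p+1) (p+(p+1))).filter (fun j => a j = a 1)).card
        ≤ ((Finset.Icc (p+1) (p+(p+1))).filter (fun j => a 2 < a j)).card := by
      apply Finset.card_le_card
      intro j hj
      rw [Finset.mem_filter] at hj ⊢
      exact ⟨hj.1, by rw [hj.2]; exact h1l⟩
    have htr2 := htri (a 2)
    have hJmp : p ≤ ((Finset.Icc (p+1) (p+(p+1))).filter (fun j => a j = a 2)).card := by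
      by_contra hcon
      push_neg at hcon
      rw [hsum] at hkey
      zify [show 1 ≤ p from by omega] at hkey
      have he1' := he1
      have htr2' := htr2
      zify at he1' htr2' hcon
      have hp' : (5:ℤ) ≤ (p:ℤ) := by exact_mod_cast hp
      nlinarith [hkey, he1', htr2', hcon, hp',
        mul_nonneg (show (0:ℤ) ≤ (p:ℤ) - 2 by linarith)
          (show (0:ℤ) ≤ (p:ℤ) - 1
              - (((Finset.Icc (p+1) (p+(p+1))).filter (fun j => a j = a 2)).card : ℤ)
            by linarith)]
    have hgt1 : 1 ≤ ((Finset.Icc (p+1) (p+(p+1))).filter (fun j => a 2 < a j)).card := by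
      apply Finset.card_pos.mpr
      exact ⟨p+1, Finset.mem_filter.mpr ⟨Finset.mem_Icc.mpr ⟨le_refl _, by omega⟩, hgtp1⟩⟩
    have hJlt0 : ((Finset.Icc (p+1) (p+(p+1))).filter (fun j => a j < a 2)).card = 0 := by omega
    have hJgt1 : ((Finset.Icc (p+1) (p+(p+1))).filter (fun j => a 2 < a j)).card = 1 := by omega
    have hge : ∀ j, p+1 ≤ j → j ≤ p+(p+1) → a 2 ≤ a j := by
      intro j hj1 hj2
      by_contra hcon
      push_neg at hcon
      have hmem : j ∈ (Finset.Icc (p+1) (p+(p+1))).filter (fun j => a j < a 2) :=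
        Finset.mem_filter.mpr ⟨Finset.mem_Icc.mpr ⟨hj1, hj2⟩, hcon⟩
      rw [Finset.card_eq_zero.mp hJlt0] at hmem
      exact absurd hmem (Finset.notMem_empty j)
    have hgtu := Finset.card_le_one.mp (le_of_eq hJgt1)
    have hmidR : ∀ j, p+2 ≤ j → j ≤ p+(p+1) → a j = a 2 := by
      intro j hj1 hj2
      refine le_antisymm ?_ (hge j (by omega) hj2)
      by_contra hcon
      push_neg at hcon
      have := hgtu j (Finset.mem_filter.mpr ⟨Finset.mem_Icc.mpr ⟨by omega, hj2⟩, hcon⟩)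
        (p+1) (Finset.mem_filter.mpr ⟨Finset.mem_Icc.mpr ⟨le_refl _, by omega⟩, hgtp1⟩)
      omega
    have htop : a 1 < a (p+1) := by
      by_contra hcon
      push_neg at hcon
      have hRm : Rminus p (p+1) a = p - 1 := by
        rw [Rminus_sum, hsplitB, Finset.sum_insert h1n]
        have hb1 : ((Finset.Icc (p+1) (p+(p+1))).filter (fun j => a 1 < a j)).card = 0 := by
          rw [Finset.card_eq_zero, Finset.filter_eq_empty_iff]
          intro b hb
          rw [Finset.mem_Icc] at hb
          push_neg
          by_cases hbt : b = p+1
          · rw [hbt]; exact hcon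
          · rw [hmidR b (by omega) hb.2]; exact le_of_lt h1l
        have hbi : ∀ i ∈ Finset.Icc 2 p,
            ((Finset.Icc (p+1) (p+(p+1))).filter (fun j => a i < a j)).card = 1 := by
          intro i hi
          rw [Finset.mem_Icc] at hi
          have : ((Finset.Icc (p+1) (p+(p+1))).filter (fun j => a i < a j)) = {p+1} := by
            apply Finset.eq_singleton_iff_unique_mem.mpr
            constructor
            · refine Finset.mem_filter.mpr ⟨Finset.mem_Icc.mpr ⟨le_refl _, by omega⟩, ?_⟩
              rw [hall2 i hi.1 hi.2]; exact hgtp1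
            · intro b hb
              rw [Finset.mem_filter, Finset.mem_Icc] at hb
              obtain ⟨⟨hb1, hb2⟩, hb3⟩ := hb
              by_contra hbne
              rw [hmidR b (by omega) hb2, hall2 i hi.1 hi.2] at hb3
              exact lt_irrefl _ hb3
          rw [this, Finset.card_singleton]
        rw [hb1, Finset.sum_congr rfl hbi, Finset.sum_const, Nat.card_Icc, smul_eq_mul,
          hpm2]
        omega
      have hmem1 : (1:ℕ) ∈ Finset.Icc 1 p := Finset.mem_Icc.mpr ⟨le_refl _, by omega⟩
      have hRp : p ≤ Rplus p (p+1) a := by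
        rw [Rplus_sum]
        have step1 : p ≤ ((Finset.Icc (p+1) (p+(p+1))).filter (fun j => a j < a 1)).card := by
          have hsub : Finset.Icc (p+2) (p+(p+1))
              ⊆ (Finset.Icc (p+1) (p+(p+1))).filter (fun j => a j < a 1) := by
            intro b hb
            rw [Finset.mem_Icc] at hb
            refine Finset.mem_filter.mpr ⟨Finset.mem_Icc.mpr ⟨by omega, hb.2⟩, ?_⟩
            rw [hmidR b hb.1 hb.2]; exact h1l
          have := Finset.card_le_card hsub
          rw [Nat.card_Icc] at this
          omega
        calc p ≤ ((Finset.Icc (p+1) (p+(p+1))).filter (fun j => a j < a 1)).card := step1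
        _ ≤ ∑ i ∈ Finset.Icc 1 p,
              ((Finset.Icc (p+1) (p+(p+1))).filter (fun j => a j < a i)).card :=
          Finset.single_le_sum
            (f := fun i => ((Finset.Icc (p+1) (p+(p+1))).filter (fun j => a j < a i)).card)
            (fun i _ => Nat.zero_le _) hmem1
      omega
    exact ⟨htop, h1l, hall2, hmidR⟩
  · -- Case D : a 1 > a 2 > a p : impossible
    exfalso
    have hsplit : Finset.Icc 1 p = insert 1 (insert p (Finset.Icc 2 (p-1))) := by
      ext x
      simp only [Finset.mem_Icc, Finset.mem_insert]
      omega
    have h1n : (1:ℕ) ∉ insert p (Finset.Icc 2 (p-1)) := by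
      simp only [Finset.mem_insert, Finset.mem_Icc]; omega
    have hpn : p ∉ Finset.Icc 2 (p-1) := by simp only [Finset.mem_Icc]; omega
    have hcongr : ∀ i ∈ Finset.Icc 2 (p-1),
        ((Finset.Icc (p+1) (p+(p+1))).filter (fun j => a j = a i)).card
        = ((Finset.Icc (p+1) (p+(p+1))).filter (fun j => a j = a 2)).card := by
      intro i hi
      rw [Finset.mem_Icc] at hi
      congr 1
      apply Finset.filter_congr
      intro j _
      rw [hmid i hi.1 hi.2]
    have hpm2 : p - 1 + 1 - 2 = p - 2 := by omega
    have hsum : ∑ i ∈ Finset.Icc 1 p,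
          ((Finset.Icc (p+1) (p+(p+1))).filter (fun j => a j = a i)).card
        = ((Finset.Icc (p+1) (p+(p+1))).filter (fun j => a j = a 1)).card
          + (((Finset.Icc (p+1) (p+(p+1))).filter (fun j => a j = a p)).card
            + (p-2) * ((Finset.Icc (p+1) (p+(p+1))).filter (fun j => a j = a 2)).card) := by
      rw [hsplit, Finset.sum_insert h1n, Finset.sum_insert hpn,
        Finset.sum_congr rfl hcongr, Finset.sum_const, Nat.card_Icc, smul_eq_mul, hpm2]
    have he1 : ((Finset.Icc (p+1) (p+(p+1))).filter (fun j => a j = a 1)).card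
        ≤ ((Finset.Icc (p+1) (p+(p+1))).filter (fun j => a 2 < a j)).card := by
      apply Finset.card_le_card
      intro j hj
      rw [Finset.mem_filter] at hj ⊢
      exact ⟨hj.1, by rw [hj.2]; exact h1l⟩
    have hep : ((Finset.Icc (p+1) (p+(p+1))).filter (fun j => a j = a p)).card
        ≤ ((Finset.Icc (p+1) (p+(p+1))).filter (fun j => a j < a 2)).card := by
      apply Finset.card_le_card
      intro j hj
      rw [Finset.mem_filter] at hj ⊢
      exact ⟨hj.1, by rw [hj.2]; exact hpl⟩
    have htr2 := htri (a 2)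
    rw [hsum] at hkey
    zify [show 2 ≤ p from by omega] at hkey
    have he1' := he1
    have hep' := hep
    zify at he1' hep' htr2
    have hp' : (5:ℤ) ≤ (p:ℤ) := by exact_mod_cast hp
    nlinarith [hkey, he1', hep', htr2, hp',
      mul_nonneg (show (0:ℤ) ≤ (p:ℤ) - 3 by linarith)
        (show (0:ℤ) ≤ (p:ℤ) + 1
            - (((Finset.Icc (p+1) (p+(p+1))).filter (fun j => a j = a 2)).card : ℤ)
          by linarith)]
lemma excl12 (p : ℕ) (a : ℕ → ℝ) (hp : 5 ≤ p) (h1 : PatP1 p (p+1) a) :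
    ¬ PatP2 p (p+1) a := by
  intro h2
  have e1 : a p = a 1 := h1.2.1 p (by omega) (le_refl p)
  linarith [h2.2.2.1]

lemma excl13 (p : ℕ) (a : ℕ → ℝ) (hp : 5 ≤ p) (h1 : PatP1 p (p+1) a) :
    ¬ PatP3 p (p+1) a := by
  intro h3
  have e1 : a 2 = a 1 := h1.2.1 2 (by omega) (by omega)
  linarith [h3.2.1]

lemma excl23 (p : ℕ) (a : ℕ → ℝ) (hp : 5 ≤ p) (h2 : PatP2 p (p+1) a) :
    ¬ PatP3 p (p+1) a := by
  intro h3
  have e1 : a 2 = a 1 := h2.1 2 (by omega) (by omega)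
  linarith [h3.2.1]

/-- when `q = p+1` (and `p ≥ 5`), a dominant sequence with
`R⁺(a) = R⁻(a) ≤ p` admitting an index `s` with `1 ≤ s ≤ p` and
`a (p+1) > a s > a (p+q)` satisfies exactly one of the patterns P1, P2, P3;
and conversely each of P1, P2, P3 implies that `a` is dominant,
`R⁺(a) = R⁻(a) = p`, and `D₂(a)` fails. -/
theorem case_q_eq_p_add_one (p q : ℕ) (a : ℕ → ℝ)
    (hp : 5 ≤ p) (hq : q = p + 1) :
    ((Dominant p q a ∧ Rplus p q a = Rminus p q a ∧ Rminus p q a ≤ p ∧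
        ∃ s, 1 ≤ s ∧ s ≤ p ∧ a s < a (p + 1) ∧ a (p + q) < a s) →
      ((PatP1 p q a ∧ ¬ PatP2 p q a ∧ ¬ PatP3 p q a) ∨
       (¬ PatP1 p q a ∧ PatP2 p q a ∧ ¬ PatP3 p q a) ∨
       (¬ PatP1 p q a ∧ ¬ PatP2 p q a ∧ PatP3 p q a))) ∧
    ((PatP1 p q a ∨ PatP2 p q a ∨ PatP3 p q a) →
      Dominant p q a ∧ Rplus p q a = p ∧ Rminus p q a = p ∧ ¬ D2 p q a) := by
  subst hq
  constructor
  · rintro ⟨hdom, hReq, hRle, s, hs1, hsp, hslt, hsgt⟩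
    rcases fwd p a hp hdom hReq hRle s hs1 hsp hslt hsgt with h | h | h
    · exact Or.inl ⟨h, excl12 p a hp h, excl13 p a hp h⟩
    · exact Or.inr (Or.inl ⟨fun h1 => excl12 p a hp h1 h, h, excl23 p a hp h⟩)
    · exact Or.inr (Or.inr ⟨fun h1 => excl13 p a hp h1 h, fun h2 => excl23 p a hp h2 h, h⟩)
  · rintro (h | h | h)
    · exact conv1 p a hp h
    · exact conv2 p a hp h
    · exact conv3 p a hp h
end
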